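/- arXiv:1709.05143 — 9 statements merged into one kernel-verified Lean document; each statement's English description precedes it below -/
import Mathlib

section
/- Let G = ([n], E) be a dependency graph of events A_1, ..., A_n with probabilities p_1, ..., p_n, and let 0 < λ < 1. Then there exists a probability space and events B_1, ..., B_n on it such that G is a dependency graph of {B_i}, Pr(B_i) = λ p_i for all i, the B_i are exclusive whenever the A_i are exclusive, and Pr(∪_i A_i) − (1−λ) Σ_i p_i ≤ Pr(∪_i B_i) ≤ Pr(∪_i A_i). -/
/-!
Thin each event independently: on `Ω × [0,1]ⁿ` take `Bᵢ = Aᵢ × {x | xᵢ ≤ λ}`. The coordinate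
events are mutually independent of probability `λ`, so taking products with them preserves the
dependency graph and exclusivity and scales every probability by `λ`. Since `Bᵢ ⊆ Aᵢ × [0,1]ⁿ`,
the union can only shrink, and what it loses lies in `⋃ᵢ Aᵢ × {xᵢ > λ}`, of measure at most
`(1 - λ) ∑ᵢ pᵢ`.
-/

open MeasureTheory

/-- `G` is a dependency graph of the events `A i` under measure `μ`. -/
def IsDepGraph {Ω : Type} [MeasurableSpace Ω] (μ : Measure Ω) {n : ℕ}
    (G : SimpleGraph (Fin n)) (A : Fin n → Set Ω) : Prop :=
  (∀ i, MeasurableSet (A i)) ∧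
  ∀ i : Fin n, ∀ S : Finset (Fin n), (∀ j ∈ S, j ≠ i ∧ ¬ G.Adj i j) →
    μ (A i ∩ ⋂ j ∈ S, A j) = μ (A i) * μ (⋂ j ∈ S, A j)

/-- The events are pairwise exclusive along the edges of `G`. -/
def IsExclusive {Ω : Type} [MeasurableSpace Ω] (μ : Measure Ω) {n : ℕ}
    (G : SimpleGraph (Fin n)) (A : Fin n → Set Ω) : Prop :=
  ∀ i j, G.Adj i j → μ (A i ∩ A j) = 0

open ProbabilityTheory

theorem Set.biInter_prod_biInter {α β ι : Type*} (S : Finset ι) (A : ι → Set α) (C : ι → Set β) :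
    (⋂ j ∈ S, A j ×ˢ C j) = (⋂ j ∈ S, A j) ×ˢ ⋂ j ∈ S, C j := by
  ext x
  simp only [Set.mem_iInter, Set.mem_prod]
  exact ⟨fun h => ⟨fun j hj => (h j hj).1, fun j hj => (h j hj).2⟩,
    fun h j hj => ⟨h.1 j hj, h.2 j hj⟩⟩

theorem ProbabilityTheory.iIndepSet_eval_preimage {ι α : Type*} [Fintype ι] [MeasurableSpace α]
    (m : Measure α) [IsProbabilityMeasure m] {s : ι → Set α} (hs : ∀ i, MeasurableSet (s i)) :
    iIndepSet (fun i => (fun x : ι → α => x i) ⁻¹' s i) (Measure.pi fun _ => m) := by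
  have hX : iIndepFun (fun i (x : ι → α) => x i) (Measure.pi fun _ => m) :=
    iIndepFun_pi (X := fun _ => id) fun _ => aemeasurable_id
  refine (iIndepSet_iff_meas_biInter fun i => measurable_pi_apply i (hs i)).2 fun S => ?_
  exact (iIndepFun_iff_measure_inter_preimage_eq_mul.1 hX) S fun i _ => hs i

theorem ProbabilityTheory.iIndepSet.isDepGraph {Ω : Type} [MeasurableSpace Ω] {ν : Measure Ω}
    {n : ℕ} {C : Fin n → Set Ω} (hind : iIndepSet C ν) (hC : ∀ i, MeasurableSet (C i))
    (G : SimpleGraph (Fin n)) : IsDepGraph ν G C := by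
  classical
  refine ⟨hC, fun i S hS => ?_⟩
  have hiS : i ∉ S := fun h => (hS i h).1 rfl
  rw [← Finset.set_biInter_insert, hind.meas_biInter, Finset.prod_insert hiS, hind.meas_biInter]

theorem IsDepGraph.prod {Ω₁ Ω₂ : Type} [MeasurableSpace Ω₁] [MeasurableSpace Ω₂]
    {μ : Measure Ω₁} {ν : Measure Ω₂} [SFinite ν] {n : ℕ} {G : SimpleGraph (Fin n)}
    {A : Fin n → Set Ω₁} {C : Fin n → Set Ω₂} (hA : IsDepGraph μ G A) (hC : IsDepGraph ν G C) :
    IsDepGraph (μ.prod ν) G fun i => A i ×ˢ C i := by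
  refine ⟨fun i => (hA.1 i).prod (hC.1 i), fun i S hS => ?_⟩
  rw [Set.biInter_prod_biInter, Set.prod_inter_prod, Measure.prod_prod, Measure.prod_prod,
    Measure.prod_prod, hA.2 i S hS, hC.2 i S hS]
  ring

theorem IsExclusive.prod {Ω₁ Ω₂ : Type} [MeasurableSpace Ω₁] [MeasurableSpace Ω₂]
    {μ : Measure Ω₁} {ν : Measure Ω₂} [SFinite ν] {n : ℕ} {G : SimpleGraph (Fin n)}
    {A : Fin n → Set Ω₁} (hA : IsExclusive μ G A) (C : Fin n → Set Ω₂) :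
    IsExclusive (μ.prod ν) G fun i => A i ×ˢ C i := by
  intro i j hij
  rw [Set.prod_inter_prod, Measure.prod_prod, hA i j hij, zero_mul]

section UnionBounds

variable {ι α β : Type*} [MeasurableSpace α] [MeasurableSpace β]
  {μ : Measure α} {ν : Measure β} [IsFiniteMeasure μ] [IsProbabilityMeasure ν]

theorem measureReal_iUnion_prod_le (A : ι → Set α) (C : ι → Set β) :
    (μ.prod ν).real (⋃ i, A i ×ˢ C i) ≤ μ.real (⋃ i, A i) := by
  calc (μ.prod ν).real (⋃ i, A i ×ˢ C i)
      ≤ (μ.prod ν).real ((⋃ i, A i) ×ˢ Set.univ) :=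
        measureReal_mono (Set.iUnion_subset fun i =>
          Set.prod_mono (Set.subset_iUnion A i) (Set.subset_univ _))
    _ = μ.real (⋃ i, A i) := by rw [measureReal_prod_prod, probReal_univ, mul_one]

theorem measureReal_iUnion_le_measureReal_iUnion_prod_add [Fintype ι] (A : ι → Set α)
    {C : ι → Set β} (hC : ∀ i, MeasurableSet (C i)) :
    μ.real (⋃ i, A i) ≤
      (μ.prod ν).real (⋃ i, A i ×ˢ C i) + ∑ i, μ.real (A i) * (1 - ν.real (C i)) := by
  have hcover : (⋃ i, A i) ×ˢ Set.univ ⊆ (⋃ i, A i ×ˢ C i) ∪ ⋃ i, A i ×ˢ (C i)ᶜ := by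
    rintro ⟨a, b⟩ ⟨ha, -⟩
    obtain ⟨i, hi⟩ := Set.mem_iUnion.1 ha
    by_cases hb : b ∈ C i
    · exact Or.inl (Set.mem_iUnion.2 ⟨i, hi, hb⟩)
    · exact Or.inr (Set.mem_iUnion.2 ⟨i, hi, hb⟩)
  calc μ.real (⋃ i, A i) = (μ.prod ν).real ((⋃ i, A i) ×ˢ Set.univ) := by
        rw [measureReal_prod_prod, probReal_univ, mul_one]
    _ ≤ (μ.prod ν).real ((⋃ i, A i ×ˢ C i) ∪ ⋃ i, A i ×ˢ (C i)ᶜ) := measureReal_mono hcover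
    _ ≤ (μ.prod ν).real (⋃ i, A i ×ˢ C i) + ∑ i, (μ.prod ν).real (A i ×ˢ (C i)ᶜ) :=
        (measureReal_union_le _ _).trans (add_le_add_right (measureReal_iUnion_fintype_le _) _)
    _ = (μ.prod ν).real (⋃ i, A i ×ˢ C i) + ∑ i, μ.real (A i) * (1 - ν.real (C i)) := by
        simp only [measureReal_prod_prod, measureReal_compl (hC _), probReal_univ]

end UnionBounds

theorem stmt1 {Ω : Type} [MeasurableSpace Ω] (μ : Measure Ω) [IsProbabilityMeasure μ]
    {n : ℕ} (G : SimpleGraph (Fin n)) (A : Fin n → Set Ω) (p : Fin n → ℝ)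
    (hdep : IsDepGraph μ G A) (hp : ∀ i, (μ (A i)).toReal = p i)
    (lam : ℝ) (hlam0 : 0 < lam) (hlam1 : lam < 1) :
    ∃ (Ω' : Type) (_ : MeasurableSpace Ω') (μ' : Measure Ω'),
      IsProbabilityMeasure μ' ∧
      ∃ B : Fin n → Set Ω',
        IsDepGraph μ' G B ∧
        (∀ i, (μ' (B i)).toReal = lam * p i) ∧
        (IsExclusive μ G A → IsExclusive μ' G B) ∧
        (μ (⋃ i, A i)).toReal - (1 - lam) * ∑ i, p i ≤ (μ' (⋃ i, B i)).toReal ∧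
        (μ' (⋃ i, B i)).toReal ≤ (μ (⋃ i, A i)).toReal := by
  let t : unitInterval := ⟨lam, hlam0.le, hlam1.le⟩
  let ν : Measure (Fin n → unitInterval) := Measure.pi fun _ => volume
  let C : Fin n → Set (Fin n → unitInterval) := fun i => (fun x => x i) ⁻¹' Set.Iic t
  have hC : ∀ i, MeasurableSet (C i) := fun i => measurable_pi_apply i measurableSet_Iic
  have hνC : ∀ i, ν.real (C i) = lam := fun i => by
    rw [measureReal_def, ((measurePreserving_eval _ i).measure_preimage
      measurableSet_Iic.nullMeasurableSet), unitInterval.volume_Iic,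
      ENNReal.toReal_ofReal hlam0.le]
  have hind : iIndepSet C ν := iIndepSet_eval_preimage volume fun _ => measurableSet_Iic
  refine ⟨Ω × (Fin n → unitInterval), inferInstance, μ.prod ν, inferInstance,
    fun i => A i ×ˢ C i, hdep.prod (hind.isDepGraph hC G), fun i => ?_,
    fun hexcl => hexcl.prod C, ?_, measureReal_iUnion_prod_le A C⟩
  · rw [← measureReal_def, measureReal_prod_prod, measureReal_def, hp, hνC, mul_comm]
  · have hlower := measureReal_iUnion_le_measureReal_iUnion_prod_add (μ := μ) (ν := ν) A hC
    simp only [hνC, measureReal_def, hp, ← Finset.sum_mul] at hlower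
    linarith
end

section
/- Let H = ([n], [m], E) be a bipartite graph with connected base graph and let p ∈ (0,1]^n. Define Λ = {λ > 0 : there exists a set of cylinders A_1,...,A_n in I^m conforming with H with μ(A_i) = min(1, λ p_i) and μ(∪_i A_i) = 1}. Then Λ is nonempty, bounded below by a positive number, and its infimum λ_0 > 0 is the unique positive real such that λ_0 p lies on the boundary of H (i.e., for every ε ∈ (0,1), (1−ε)λ_0 p is in the interior of H and (1+ε)λ_0 p is not). -/
open MeasureTheory

/-- The uniform probability measure on the unit cube `[0,1]^m`, viewed as a measure
on `Fin m → ℝ`. -/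
noncomputable def cubeMeasure (m : ℕ) : Measure (Fin m → ℝ) :=
  Measure.pi fun _ => volume.restrict (Set.Icc 0 1)

/-- `A` is a cylinder depending only on the coordinates in `S`. -/
def DependsOnlyOn {m : ℕ} (A : Set (Fin m → ℝ)) (S : Set (Fin m)) : Prop :=
  ∀ x y : Fin m → ℝ, (∀ j ∈ S, x j = y j) → (x ∈ A ↔ y ∈ A)

/-- A cylinder set conforms with the bigraph given by edge relation `E`:
each `A i` is measurable and depends only on the coordinates adjacent to `i`. -/
def Conforms {n m : ℕ} (E : Fin n → Fin m → Prop) (A : Fin n → Set (Fin m → ℝ)) : Prop :=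
  (∀ i, MeasurableSet (A i)) ∧ ∀ i, DependsOnlyOn (A i) {j | E i j}

/-- `p` lies in the interior of the bigraph: `p ∈ (0,1)^n` and every conforming
cylinder set with measure vector `p` has union of measure less than 1. -/
def InInterior {n m : ℕ} (E : Fin n → Fin m → Prop) (p : Fin n → ℝ) : Prop :=
  (∀ i, 0 < p i ∧ p i < 1) ∧
  ∀ A : Fin n → Set (Fin m → ℝ), Conforms E A →
    (∀ i, cubeMeasure m (A i) = ENNReal.ofReal (p i)) →
    cubeMeasure m (⋃ i, A i) < 1

/-- The base graph of the bigraph: left vertices are adjacent iff they share a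
common right neighbor. -/
def baseGraph {n m : ℕ} (E : Fin n → Fin m → Prop) : SimpleGraph (Fin n) where
  Adj i j := i ≠ j ∧ ∃ k, E i k ∧ E j k
  symm := ⟨by rintro i j ⟨h, k, h1, h2⟩; exact ⟨h.symm, k, h2, h1⟩⟩
  loopless := ⟨by rintro i ⟨h, -⟩; exact h rfl⟩

/-- The set of scaling factors `λ` for which some conforming cylinder set with
measure vector `min 1 (λ • p)` has union of full measure. -/
def LamSet {n m : ℕ} (E : Fin n → Fin m → Prop) (p : Fin n → ℝ) : Set ℝ :=
  {lam | 0 < lam ∧ ∃ A : Fin n → Set (Fin m → ℝ), Conforms E A ∧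
    (∀ i, cubeMeasure m (A i) = ENNReal.ofReal (min 1 (lam * p i))) ∧
    cubeMeasure m (⋃ i, A i) = 1}

/-!
A cylinder depending on the coordinates `N(i) ≠ ∅` can be enlarged, without leaving those
coordinates, to any larger measure: add a slab `{x | x j ≤ s}` with `j ∈ N(i)`, whose measure
is continuous in `s`, and use the intermediate value theorem. Hence `Λ` is an up-set. The union
bound gives `1 ≤ n λ` on `Λ`, and `(max p)⁻¹ ∈ Λ`, so `λ₀ = inf Λ` is positive and
`λ₀ p ≤ 1`. Thus `λ p` is in the interior for `0 < λ < λ₀` and not for `λ > λ₀`, and this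
threshold property characterises the boundary ray through `p`.
-/

open Set Filter Topology

instance : IsProbabilityMeasure (volume.restrict (Icc (0 : ℝ) 1)) :=
  ⟨by rw [Measure.restrict_apply_univ, Real.volume_Icc]; norm_num⟩

instance (m : ℕ) : IsProbabilityMeasure (cubeMeasure m) := by
  unfold cubeMeasure; infer_instance

theorem cubeMeasure_setOf_mem (m : ℕ) (j : Fin m) {S : Set ℝ} (hS : MeasurableSet S) :
    cubeMeasure m {x | x j ∈ S} = volume.restrict (Icc 0 1) S :=
  (measurePreserving_eval (fun _ : Fin m => volume.restrict (Icc (0 : ℝ) 1)) j).measure_preimage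
    hS.nullMeasurableSet

theorem cubeMeasure_setOf_le {m : ℕ} (j : Fin m) {t : ℝ} (h1 : t ≤ 1) :
    cubeMeasure m {x | x j ≤ t} = ENNReal.ofReal t := by
  rw [show {x : Fin m → ℝ | x j ≤ t} = {x | x j ∈ Iic t} from rfl,
    cubeMeasure_setOf_mem m j measurableSet_Iic, Measure.restrict_apply measurableSet_Iic,
    show Iic t ∩ Icc 0 1 = Icc 0 t by ext; simp only [mem_inter_iff, mem_Iic, mem_Icc]; grind,
    Real.volume_Icc, sub_zero]

theorem cubeMeasure_setOf_mem_Ioc_le {m : ℕ} (j : Fin m) (s t : ℝ) :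
    cubeMeasure m {x | x j ∈ Ioc s t} ≤ ENNReal.ofReal (t - s) := by
  rw [cubeMeasure_setOf_mem m j measurableSet_Ioc, ← Real.volume_Ioc]
  exact Measure.restrict_apply_le _ _

theorem DependsOnlyOn.eq_empty_or_eq_univ {m : ℕ} {A : Set (Fin m → ℝ)}
    (h : DependsOnlyOn A ∅) : A = ∅ ∨ A = univ := by
  refine (eq_empty_or_nonempty A).imp_right fun ⟨x, hx⟩ => eq_univ_of_forall fun y => ?_
  exact (h x y fun _ hj => absurd hj (notMem_empty _)).1 hx

theorem DependsOnlyOn.union {m : ℕ} {A B : Set (Fin m → ℝ)} {S : Set (Fin m)}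
    (hA : DependsOnlyOn A S) (hB : DependsOnlyOn B S) : DependsOnlyOn (A ∪ B) S :=
  fun x y hxy => or_congr (hA x y hxy) (hB x y hxy)

theorem dependsOnlyOn_setOf_le {m : ℕ} {S : Set (Fin m)} {j : Fin m} (hj : j ∈ S) (s : ℝ) :
    DependsOnlyOn {x | x j ≤ s} S := fun x y hxy => by
  simp only [mem_ofPred_eq, hxy j hj]

theorem cubeMeasure_union_setOf_le_mono {m : ℕ} (A : Set (Fin m → ℝ)) (j : Fin m) :
    Monotone fun s : ℝ => cubeMeasure m (A ∪ {x | x j ≤ s}) := fun _ _ hab =>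
  measure_mono (union_subset_union_right _ fun _ hx => le_trans hx hab)

theorem cubeMeasure_union_setOf_le_le_add {m : ℕ} (A : Set (Fin m → ℝ)) (j : Fin m) (a b : ℝ) :
    cubeMeasure m (A ∪ {x | x j ≤ b}) ≤
      cubeMeasure m (A ∪ {x | x j ≤ a}) + ENNReal.ofReal (b - a) := by
  have hsub : A ∪ {x : Fin m → ℝ | x j ≤ b} ⊆ (A ∪ {x | x j ≤ a}) ∪ {x | x j ∈ Ioc a b} := by
    rintro x (hx | hx)
    · exact Or.inl (Or.inl hx)
    · rcases le_or_gt (x j) a with h | h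
      · exact Or.inl (Or.inr h)
      · exact Or.inr ⟨h, hx⟩
  exact (measure_mono hsub).trans
    ((measure_union_le _ _).trans (add_le_add_right (cubeMeasure_setOf_mem_Ioc_le j a b) _))

theorem DependsOnlyOn.exists_superset_measure_eq {m : ℕ} {A : Set (Fin m → ℝ)}
    {S : Set (Fin m)} (hAm : MeasurableSet A) (hA : DependsOnlyOn A S) {j : Fin m} (hj : j ∈ S)
    {t : ℝ} (ht0 : (cubeMeasure m A).toReal ≤ t) (ht1 : t ≤ 1) :
    ∃ B, A ⊆ B ∧ MeasurableSet B ∧ DependsOnlyOn B S ∧ cubeMeasure m B = ENNReal.ofReal t := by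
  set f : ℝ → ℝ := fun s => (cubeMeasure m (A ∪ {x | x j ≤ s})).toReal
  have hf : Continuous f := by
    refine (LipschitzWith.of_le_add fun a b => ?_).continuous
    rcases le_total a b with hab | hba
    · have := ENNReal.toReal_mono (measure_ne_top _ _) (cubeMeasure_union_setOf_le_mono A j hab)
      linarith [dist_nonneg (x := a) (y := b)]
    · have := ENNReal.toReal_mono (by finiteness) (cubeMeasure_union_setOf_le_le_add A j b a)
      rw [ENNReal.toReal_add (measure_ne_top _ _) ENNReal.ofReal_ne_top,
        ENNReal.toReal_ofReal (sub_nonneg.2 hba)] at this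
      rw [Real.dist_eq, abs_of_nonneg (sub_nonneg.2 hba)]
      linarith
  have hf0 : f 0 = (cubeMeasure m A).toReal := by
    have hnull : cubeMeasure m {x : Fin m → ℝ | x j ≤ 0} = 0 := by
      rw [cubeMeasure_setOf_le j zero_le_one, ENNReal.ofReal_zero]
    simp only [f, measure_congr (union_ae_eq_left_of_ae_eq_empty (ae_eq_empty.2 hnull))]
  have hf1 : f 1 = 1 := by
    have hfull : cubeMeasure m {x : Fin m → ℝ | x j ≤ 1} = 1 := by
      rw [cubeMeasure_setOf_le j le_rfl, ENNReal.ofReal_one]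
    simp only [f, le_antisymm prob_le_one (hfull ▸ measure_mono subset_union_right),
      ENNReal.toReal_one]
  obtain ⟨s, -, hs⟩ :=
    intermediate_value_Icc zero_le_one hf.continuousOn (show t ∈ Icc (f 0) (f 1) by
      rw [hf0, hf1]; exact ⟨ht0, ht1⟩)
  refine ⟨A ∪ {x | x j ≤ s}, subset_union_left,
    hAm.union (measurableSet_le (measurable_pi_apply j) measurable_const),
    hA.union (dependsOnlyOn_setOf_le hj s), ?_⟩
  rw [← hs, ENNReal.ofReal_toReal (measure_ne_top _ _)]

theorem DependsOnlyOn.exists_superset_measure_eq_min {m : ℕ} {A : Set (Fin m → ℝ)}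
    {S : Set (Fin m)} (hAm : MeasurableSet A) (hA : DependsOnlyOn A S) {a b : ℝ} (ha : 0 < a)
    (hab : a ≤ b) (hμA : cubeMeasure m A = ENNReal.ofReal (min 1 a)) :
    ∃ B, A ⊆ B ∧ MeasurableSet B ∧ DependsOnlyOn B S ∧
      cubeMeasure m B = ENNReal.ofReal (min 1 b) := by
  rcases S.eq_empty_or_nonempty with rfl | ⟨j, hj⟩
  · rcases hA.eq_empty_or_eq_univ with rfl | rfl
    · rw [measure_empty, eq_comm, ENNReal.ofReal_eq_zero] at hμA
      exact absurd hμA (lt_min one_pos ha).not_ge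
    · rw [measure_univ, eq_comm, ENNReal.ofReal_eq_one, min_eq_left_iff] at hμA
      exact ⟨univ, subset_rfl, hAm, hA, by rw [measure_univ, min_eq_left (hμA.trans hab),
        ENNReal.ofReal_one]⟩
  · refine hA.exists_superset_measure_eq hAm hj ?_ (min_le_left _ _)
    rw [hμA, ENNReal.toReal_ofReal (le_min zero_le_one ha.le)]
    exact min_le_min_left _ hab

section

variable {n m : ℕ} {E : Fin n → Fin m → Prop} {p : Fin n → ℝ}

theorem LamSet.mem_of_le (hp : ∀ i, 0 < p i) {lam lam' : ℝ} (h : lam ∈ LamSet E p)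
    (hle : lam ≤ lam') : lam' ∈ LamSet E p := by
  obtain ⟨hpos, A, ⟨hAm, hA⟩, hμA, hU⟩ := h
  choose B hAB hBm hB hμB using fun i => (hA i).exists_superset_measure_eq_min (hAm i)
    (mul_pos hpos (hp i)) (mul_le_mul_of_nonneg_right hle (hp i).le) (hμA i)
  exact ⟨hpos.trans_le hle, B, ⟨hBm, hB⟩, hμB,
    le_antisymm prob_le_one (hU ▸ measure_mono (iUnion_mono hAB))⟩

theorem LamSet.one_le_card_mul (hp : ∀ i, p i ≤ 1) {lam : ℝ} (h : lam ∈ LamSet E p) :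
    1 ≤ n * lam := by
  obtain ⟨hpos, A, -, hμA, hU⟩ := h
  have hmin : ∀ i, min 1 (lam * p i) ≤ lam := fun i =>
    (min_le_right _ _).trans (mul_le_of_le_one_right hpos.le (hp i))
  have : (1 : ENNReal) ≤ ENNReal.ofReal (n * lam) :=
    calc 1 = cubeMeasure m (⋃ i, A i) := hU.symm
      _ ≤ ∑ i, cubeMeasure m (A i) := measure_iUnion_fintype_le _ _
      _ ≤ ∑ _i : Fin n, ENNReal.ofReal lam :=
          Finset.sum_le_sum fun i _ => (hμA i).trans_le (ENNReal.ofReal_le_ofReal (hmin i))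
      _ = ENNReal.ofReal (n * lam) := by
          rw [Finset.sum_const, Finset.card_univ, Fintype.card_fin, nsmul_eq_mul,
            ENNReal.ofReal_mul (Nat.cast_nonneg n), ENNReal.ofReal_natCast]
  exact ENNReal.one_le_ofReal.1 this

theorem LamSet.inv_card_add_one_le (hp : ∀ i, p i ≤ 1) {lam : ℝ} (h : lam ∈ LamSet E p) :
    ((n : ℝ) + 1)⁻¹ ≤ lam := by
  rw [inv_le_iff_one_le_mul₀' (by positivity)]
  linarith [LamSet.one_le_card_mul hp h, h.1]

theorem eq_of_baseGraph_connected_of_isolated (hconn : (baseGraph E).Connected) {i : Fin n}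
    (hi : ∀ j, ¬ E i j) (k : Fin n) : k = i := by
  by_contra hki
  have : Nontrivial (Fin n) := ⟨⟨k, i, hki⟩⟩
  obtain ⟨-, -, j, hij, -⟩ := hconn.preconnected.exists_adj_of_nontrivial i
  exact hi j hij

/-- Witness: the slabs `{x | x j ≤ min 1 (p i / p i₀)}` in a neighbouring coordinate `j`, so that
`A i₀` has full measure; a vertex without neighbours forces `n = 1`. -/
theorem LamSet.inv_mem (hconn : (baseGraph E).Connected) (hp : ∀ i, 0 < p i) (i₀ : Fin n) :
    (p i₀)⁻¹ ∈ LamSet E p := by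
  have hcyl : ∀ i, ∃ A, MeasurableSet A ∧ DependsOnlyOn A {j | E i j} ∧
      cubeMeasure m A = ENNReal.ofReal (min 1 ((p i₀)⁻¹ * p i)) := by
    intro i
    by_cases hi : ∃ j, E i j
    · obtain ⟨j, hj⟩ := hi
      exact ⟨_, measurableSet_le (measurable_pi_apply j) measurable_const,
        dependsOnlyOn_setOf_le hj _, cubeMeasure_setOf_le j (min_le_left _ _)⟩
    · obtain rfl := eq_of_baseGraph_connected_of_isolated hconn (not_exists.1 hi) i₀
      refine ⟨univ, MeasurableSet.univ, fun _ _ _ => Iff.rfl, ?_⟩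
      rw [measure_univ, inv_mul_cancel₀ (hp i₀).ne', min_self, ENNReal.ofReal_one]
  choose A hAm hA hμA using hcyl
  have hμA₀ : cubeMeasure m (A i₀) = 1 := by
    rw [hμA, inv_mul_cancel₀ (hp i₀).ne', min_self, ENNReal.ofReal_one]
  exact ⟨inv_pos.2 (hp i₀), A, ⟨hAm, hA⟩, hμA,
    le_antisymm prob_le_one (hμA₀ ▸ measure_mono (subset_iUnion A i₀))⟩

theorem LamSet.bddBelow : BddBelow (LamSet E p) := ⟨0, fun _ h => h.1.le⟩

theorem sInf_lamSet_mul_le_one (hconn : (baseGraph E).Connected) (hp : ∀ i, 0 < p i) (i : Fin n) :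
    sInf (LamSet E p) * p i ≤ 1 := by
  have := hconn.nonempty
  obtain ⟨i₀, -, hi₀⟩ := Finset.univ.exists_max_image p Finset.univ_nonempty
  calc sInf (LamSet E p) * p i ≤ (p i₀)⁻¹ * p i :=
        mul_le_mul_of_nonneg_right (csInf_le LamSet.bddBelow (LamSet.inv_mem hconn hp i₀))
          (hp i).le
    _ ≤ 1 := inv_mul_le_one_of_le₀ (hi₀ i (Finset.mem_univ i)) (hp i₀).le

theorem inInterior_of_lt_sInf (hconn : (baseGraph E).Connected) (hp : ∀ i, 0 < p i) {lam : ℝ}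
    (hlam : 0 < lam) (hlt : lam < sInf (LamSet E p)) : InInterior E fun i => lam * p i := by
  have hlt1 : ∀ i, lam * p i < 1 := fun i =>
    (mul_lt_mul_of_pos_right hlt (hp i)).trans_le (sInf_lamSet_mul_le_one hconn hp i)
  refine ⟨fun i => ⟨mul_pos hlam (hp i), hlt1 i⟩, fun A hA hμA => lt_of_not_ge fun hU => ?_⟩
  have hmem : lam ∈ LamSet E p := ⟨hlam, A, hA,
    fun i => by rw [hμA, min_eq_right (hlt1 i).le], le_antisymm prob_le_one hU⟩
  exact (csInf_le LamSet.bddBelow hmem).not_gt hlt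

theorem not_inInterior_of_sInf_lt (hne : (LamSet E p).Nonempty) (hp : ∀ i, 0 < p i) {lam : ℝ}
    (hlt : sInf (LamSet E p) < lam) : ¬ InInterior E fun i => lam * p i := by
  rintro ⟨hlt1, hint⟩
  obtain ⟨lam₁, hmem, hlam₁⟩ := exists_lt_of_csInf_lt hne hlt
  obtain ⟨-, A, hA, hμA, hU⟩ := LamSet.mem_of_le hp hmem hlam₁.le
  exact (hint A hA fun i => by rw [hμA, min_eq_right (hlt1 i).2.le]).ne hU

end

theorem boundary_iff_eq_of_threshold {Q : ℝ → Prop} {a : ℝ} (ha : 0 < a)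
    (hlt : ∀ x, 0 < x → x < a → Q x) (hgt : ∀ x, a < x → ¬ Q x) {b : ℝ} (hb : 0 < b) :
    (∀ ε ∈ Ioo (0 : ℝ) 1, Q ((1 - ε) * b) ∧ ¬ Q ((1 + ε) * b)) ↔ b = a := by
  refine ⟨fun h => ?_, ?_⟩
  · have hsub : Tendsto (fun ε : ℝ => (1 - ε) * b) (𝓝[>] 0) (𝓝 b) := by
      simpa using ((by fun_prop : Continuous fun ε : ℝ => (1 - ε) * b).tendsto 0).mono_left
        nhdsWithin_le_nhds
    have hadd : Tendsto (fun ε : ℝ => (1 + ε) * b) (𝓝[>] 0) (𝓝 b) := by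
      simpa using ((by fun_prop : Continuous fun ε : ℝ => (1 + ε) * b).tendsto 0).mono_left
        nhdsWithin_le_nhds
    have hsmall : ∀ᶠ ε in 𝓝[>] (0 : ℝ), ε ∈ Ioo 0 1 := Ioo_mem_nhdsGT one_pos
    rcases lt_trichotomy b a with hba | hba | hab
    · obtain ⟨ε, hε, hεa⟩ := (hsmall.and (hadd.eventually_lt_const hba)).exists
      exact absurd (hlt _ (mul_pos (by linarith [hε.1]) hb) hεa) (h ε hε).2
    · exact hba
    · obtain ⟨ε, hε, hεa⟩ := (hsmall.and (hsub.eventually_const_lt hab)).exists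
      exact absurd (h ε hε).1 (hgt _ hεa)
  · rintro rfl ε ⟨hε0, hε1⟩
    exact ⟨hlt _ (mul_pos (sub_pos.2 hε1) ha) (by nlinarith), hgt _ (by nlinarith)⟩

theorem stmt3 {n m : ℕ} (E : Fin n → Fin m → Prop)
    (hconn : (baseGraph E).Connected) (p : Fin n → ℝ)
    (hp : ∀ i, 0 < p i ∧ p i ≤ 1) :
    (LamSet E p).Nonempty ∧
    (∃ c > (0:ℝ), ∀ lam ∈ LamSet E p, c ≤ lam) ∧
    0 < sInf (LamSet E p) ∧
    (∀ ε ∈ Set.Ioo (0:ℝ) 1,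
      InInterior E (fun i => (1 - ε) * (sInf (LamSet E p) * p i)) ∧
      ¬ InInterior E (fun i => (1 + ε) * (sInf (LamSet E p) * p i))) ∧
    (∀ lam' : ℝ, 0 < lam' →
      (∀ ε ∈ Set.Ioo (0:ℝ) 1,
        InInterior E (fun i => (1 - ε) * (lam' * p i)) ∧
        ¬ InInterior E (fun i => (1 + ε) * (lam' * p i))) →
      lam' = sInf (LamSet E p)) := by
  have hp0 : ∀ i, 0 < p i := fun i => (hp i).1
  obtain ⟨i₀⟩ := hconn.nonempty
  have hne : (LamSet E p).Nonempty := ⟨_, LamSet.inv_mem hconn hp0 i₀⟩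
  have hlb : ∀ lam ∈ LamSet E p, ((n : ℝ) + 1)⁻¹ ≤ lam :=
    fun _ => LamSet.inv_card_add_one_le fun i => (hp i).2
  have hpos : 0 < sInf (LamSet E p) := (by positivity : (0 : ℝ) < _).trans_le (le_csInf hne hlb)
  have hboundary := fun {b : ℝ} => boundary_iff_eq_of_threshold
    (Q := fun lam => InInterior E fun i => lam * p i) hpos
    (fun _ hx hlt => inInterior_of_lt_sInf hconn hp0 hx hlt)
    (fun _ hgt => not_inInterior_of_sInf_lt hne hp0 hgt) (b := b)
  simp only [mul_assoc] at hboundary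
  exact ⟨hne, ⟨_, by positivity, hlb⟩, hpos, hboundary hpos |>.2 rfl,
    fun _ hlam' h => (hboundary hlam').1 h⟩
end

section
/- Let G be a graph which is a tree on n+1 vertices, rooted at a vertex r, and let p ∈ (0,1)^{n+1} be such that the following system has a solution with all q_i ∈ (0,1): q_i = p_i if i is a leaf, q_i = p_i / ∏_{k child of i} (1 − q_k) if i ≠ r is internal, and p_r = ∏_{k child of r} (1 − q_k). Then there exists a probability space and events A_1,...,A_{n+1} with dependency graph G, Pr(A_i) = p_i for all i, Pr(A_i ∩ A_j) = 0 for every edge {i,j} of G, and Pr(∪_i A_i) = 1. -/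
open MeasureTheory

namespace Stmt7Aux

/-! ### Tree lemmas -/

variable {V : Type*} [DecidableEq V] {G : SimpleGraph V}

lemma shortest_avoid (ht : G.IsTree) (r a k : V)
    (hd : G.dist r a < G.dist r k) :
    ∃ p : G.Walk r a, p.IsPath ∧ p.length = G.dist r a ∧ k ∉ p.support := by
  obtain ⟨p, hp, hl⟩ := ht.isConnected.exists_path_of_dist r a
  refine ⟨p, hp, hl, fun hk => ?_⟩
  have h1 := SimpleGraph.Walk.length_takeUntil_le p hk
  have h2 : G.dist r k ≤ (p.takeUntil k hk).length := SimpleGraph.dist_le _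
  omega

lemma parent_unique (ht : G.IsTree) (r a b k : V) (hak : G.Adj a k) (hbk : G.Adj b k)
    (hda : G.dist r k = G.dist r a + 1) (hdb : G.dist r k = G.dist r b + 1) : a = b := by
  obtain ⟨pa, hpa, hla, hka⟩ := shortest_avoid ht r a k (by omega)
  obtain ⟨pb, hpb, hlb, hkb⟩ := shortest_avoid ht r b k (by omega)
  have hqa : (pa.concat hak).IsPath := by
    rw [← SimpleGraph.Walk.isPath_reverse_iff, SimpleGraph.Walk.reverse_concat]
    exact hpa.reverse.cons (by simpa [SimpleGraph.Walk.support_reverse] using hka)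
  have hqb : (pb.concat hbk).IsPath := by
    rw [← SimpleGraph.Walk.isPath_reverse_iff, SimpleGraph.Walk.reverse_concat]
    exact hpb.reverse.cons (by simpa [SimpleGraph.Walk.support_reverse] using hkb)
  have huniq := SimpleGraph.isAcyclic_iff_path_unique.mp ht.IsAcyclic
    (⟨pa.concat hak, hqa⟩ : G.Path r k) ⟨pb.concat hbk, hqb⟩
  have heq : pa.concat hak = pb.concat hbk := congrArg Subtype.val huniq
  exact (SimpleGraph.Walk.concat_inj heq).1

lemma adj_dist (ht : G.IsTree) (r i j : V) (hij : G.Adj i j) :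
    G.dist r j = G.dist r i + 1 ∨ G.dist r i = G.dist r j + 1 := by
  have hc := ht.isConnected
  have h1 : G.dist r j ≤ G.dist r i + 1 := by
    have := hc.dist_triangle (u := r) (v := i) (w := j)
    rwa [SimpleGraph.dist_eq_one_iff_adj.mpr hij] at this
  have h2 : G.dist r i ≤ G.dist r j + 1 := by
    have := hc.dist_triangle (u := r) (v := j) (w := i)
    rwa [SimpleGraph.dist_eq_one_iff_adj.mpr hij.symm] at this
  rcases Nat.lt_or_ge (G.dist r i) (G.dist r j) with h | h
  · left; omega
  rcases Nat.lt_or_ge (G.dist r j) (G.dist r i) with h' | h'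
  · right; omega
  exfalso
  have heq : G.dist r i = G.dist r j := by omega
  obtain ⟨p, hp, hl⟩ := hc.exists_path_of_dist r i
  have hj : j ∉ p.support := by
    intro hjm
    have hts := congrArg SimpleGraph.Walk.length (p.take_spec hjm)
    rw [SimpleGraph.Walk.length_append] at hts
    have h3 : G.dist r j ≤ (p.takeUntil j hjm).length := SimpleGraph.dist_le _
    have h4 : G.dist j i ≤ (p.dropUntil j hjm).length := SimpleGraph.dist_le _
    have h5 : G.dist j i = 1 := SimpleGraph.dist_eq_one_iff_adj.mpr hij.symm
    omega
  have hq : (p.concat hij).IsPath := by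
    rw [← SimpleGraph.Walk.isPath_reverse_iff, SimpleGraph.Walk.reverse_concat]
    exact hp.reverse.cons (by simpa [SimpleGraph.Walk.support_reverse] using hj)
  obtain ⟨p', hp', hl'⟩ := hc.exists_path_of_dist r j
  have huniq := SimpleGraph.isAcyclic_iff_path_unique.mp ht.IsAcyclic
    (⟨p.concat hij, hq⟩ : G.Path r j) ⟨p', hp'⟩
  have hle : (p.concat hij).length = p'.length :=
    congrArg (fun P : G.Path r j => P.val.length) huniq
  rw [SimpleGraph.Walk.length_concat] at hle
  omega

/-! ### The weighted Bernoulli measure on `Fin N → Bool` -/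

instance pi_msc {N : ℕ} : MeasurableSingletonClass (Fin N → Bool) := by
  refine ⟨fun ω => ?_⟩
  have h : ({ω} : Set (Fin N → Bool)) = ⋂ i, (fun f : Fin N → Bool => f i) ⁻¹' {ω i} := by
    ext f; simp [funext_iff]
  rw [h]
  exact MeasurableSet.iInter fun i => (measurable_pi_apply i) (measurableSet_singleton _)

variable {N : ℕ}

noncomputable def wt (q : Fin N → ℝ) (i : Fin N) (b : Bool) : ENNReal :=
  ENNReal.ofReal (if b then q i else 1 - q i)

noncomputable def mu (q : Fin N → ℝ) : Measure (Fin N → Bool) :=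
  ∑ ω : Fin N → Bool, (∏ i, wt q i (ω i)) • Measure.dirac ω

lemma mu_apply (q : Fin N → ℝ) (s : Set (Fin N → Bool)) [DecidablePred (· ∈ s)] :
    mu q s = ∑ ω : Fin N → Bool, if ω ∈ s then (∏ i, wt q i (ω i)) else 0 := by
  rw [mu, Measure.finset_sum_apply]
  refine Finset.sum_congr rfl fun ω _ => ?_
  rw [Measure.smul_apply, Measure.dirac_apply' _ MeasurableSet.of_discrete, smul_eq_mul]
  by_cases h : ω ∈ s <;> simp [h]

lemma wt_total (q : Fin N → ℝ) (hq : ∀ i, 0 < q i ∧ q i < 1) (i : Fin N) :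
    wt q i true + wt q i false = 1 := by
  rw [wt, wt, if_pos rfl, if_neg (by simp)]
  rw [← ENNReal.ofReal_add (hq i).1.le (by linarith [(hq i).2])]
  norm_num

lemma mu_cyl (q : Fin N → ℝ) (hq : ∀ i, 0 < q i ∧ q i < 1) (T : Finset (Fin N))
    (b : Fin N → Bool) :
    mu q {ω : Fin N → Bool | ∀ k ∈ T, ω k = b k} = ∏ k ∈ T, wt q k (b k) := by
  classical
  rw [mu_apply]
  have h1 : ∀ ω : Fin N → Bool,
      (if ω ∈ {ω : Fin N → Bool | ∀ k ∈ T, ω k = b k} then (∏ i, wt q i (ω i)) else 0)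
        = ∏ i, (if i ∈ T then (if ω i = b i then wt q i (ω i) else 0)
            else wt q i (ω i)) := by
    intro ω
    simp only [Set.mem_setOf_eq]
    by_cases h : ∀ k ∈ T, ω k = b k
    · rw [if_pos h]
      refine Finset.prod_congr rfl fun i _ => ?_
      by_cases hi : i ∈ T
      · rw [if_pos hi, if_pos (h i hi)]
      · rw [if_neg hi]
    · rw [if_neg h]
      push_neg at h
      obtain ⟨k, hk, hne⟩ := h
      refine (Finset.prod_eq_zero (Finset.mem_univ k) ?_).symm
      rw [if_pos hk, if_neg hne]
  rw [Finset.sum_congr rfl fun ω _ => h1 ω]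
  rw [show (Finset.univ : Finset (Fin N → Bool))
      = Fintype.piFinset (fun _ : Fin N => (Finset.univ : Finset Bool)) from
    (Fintype.piFinset_univ).symm]
  have h2 := Finset.prod_univ_sum (fun _ : Fin N => (Finset.univ : Finset Bool))
    (fun i c => if i ∈ T then (if c = b i then wt q i c else 0) else wt q i c)
  rw [← h2]
  have h3 : ∀ i : Fin N, (∑ c : Bool, if i ∈ T then (if c = b i then wt q i c else 0)
      else wt q i c) = if i ∈ T then wt q i (b i) else 1 := by
    intro i
    rw [Fintype.sum_bool]
    by_cases hi : i ∈ T
    · simp only [if_pos hi]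
      cases hb : b i <;> simp [hb]
    · simp only [if_neg hi]
      exact wt_total q hq i
  rw [Finset.prod_congr rfl fun i _ => h3 i, Finset.prod_ite_mem, Finset.univ_inter]

end Stmt7Aux

open Stmt7Aux

theorem stmt7 {n : ℕ} (G : SimpleGraph (Fin (n+1))) [DecidableRel G.Adj]
    (htree : G.IsTree) (r : Fin (n+1)) (p q : Fin (n+1) → ℝ)
    (hp : ∀ i, 0 < p i ∧ p i < 1) (hq : ∀ i, 0 < q i ∧ q i < 1)
    (child : Fin (n+1) → Finset (Fin (n+1)))
    (hchild : ∀ i, child i =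
      Finset.univ.filter fun k => G.Adj i k ∧ G.dist r k = G.dist r i + 1)
    (hleaf : ∀ i, i ≠ r → child i = ∅ → q i = p i)
    (hinternal : ∀ i, i ≠ r → child i ≠ ∅ →
      q i = p i / ∏ k ∈ child i, (1 - q k))
    (hroot : p r = ∏ k ∈ child r, (1 - q k)) :
    ∃ (Ω : Type) (_ : MeasurableSpace Ω) (μ : Measure Ω),
      IsProbabilityMeasure μ ∧
      ∃ A : Fin (n+1) → Set Ω,
        IsDepGraph μ G A ∧
        (∀ i, μ (A i) = ENNReal.ofReal (p i)) ∧
        (∀ i j, G.Adj i j → μ (A i ∩ A j) = 0) ∧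
        μ (⋃ i, A i) = 1 := by
  classical
  set D : Fin (n+1) → Finset (Fin (n+1)) :=
    fun i => if i = r then child r else insert i (child i) with hD
  set A : Fin (n+1) → Set (Fin (n+1) → Bool) :=
    fun i => {ω : Fin (n+1) → Bool | ∀ k ∈ D i, ω k = decide (k = i)} with hA
  -- basic facts about children
  have hmem : ∀ i k, k ∈ child i ↔ (G.Adj i k ∧ G.dist r k = G.dist r i + 1) := by
    intro i k; rw [hchild]; simp
  have hchild_ne : ∀ i k, k ∈ child i → k ≠ i :=
    fun i k hk => (((hmem i k).1 hk).1.ne).symm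
  have hchild_nr : ∀ i k, k ∈ child i → k ≠ r := by
    intro i k hk hkr
    have h := ((hmem i k).1 hk).2
    rw [hkr, SimpleGraph.dist_self] at h
    omega
  have hself : ∀ i, i ∉ child i := fun i hi => (hchild_ne i i hi) rfl
  have hDsub : ∀ i k, k ∈ D i → k = i ∨ k ∈ child i := by
    intro i k hk
    simp only [hD] at hk
    by_cases h : i = r
    · rw [if_pos h] at hk; right; rw [h]; exact hk
    · rw [if_neg h] at hk
      rcases Finset.mem_insert.mp hk with h' | h'
      · left; exact h'
      · right; exact h'
  have hDself : ∀ i, i ≠ r → i ∈ D i := by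
    intro i h; simp only [hD, if_neg h]; exact Finset.mem_insert_self i (child i)
  have hchildD : ∀ i k, k ∈ child i → k ∈ D i := by
    intro i k hk
    simp only [hD]
    by_cases h : i = r
    · rw [if_pos h, ← h]; exact hk
    · rw [if_neg h]; exact Finset.mem_insert_of_mem hk
  have hadj : ∀ a b, G.Adj a b → b ∈ child a ∨ a ∈ child b := by
    intro a b hab
    rcases adj_dist htree r a b hab with h | h
    · left; exact (hmem a b).2 ⟨hab, h⟩
    · right; exact (hmem b a).2 ⟨hab.symm, h⟩
  have hdisj : ∀ a b, a ≠ b → ¬G.Adj a b → Disjoint (D a) (D b) := by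
    intro a b hab hnadj
    rw [Finset.disjoint_left]
    intro k hka hkb
    rcases hDsub a k hka with rfl | hka'
    · rcases hDsub b k hkb with rfl | hkb'
      · exact hab rfl
      · exact hnadj (((hmem b k).1 hkb').1.symm)
    · rcases hDsub b k hkb with rfl | hkb'
      · exact hnadj ((hmem a k).1 hka').1
      · exact hab (parent_unique htree r a b k ((hmem a k).1 hka').1
          ((hmem b k).1 hkb').1 ((hmem a k).1 hka').2 ((hmem b k).1 hkb').2)
  -- probability of each event
  have hAcyl : ∀ i, mu q (A i) = ∏ k ∈ D i, wt q k (decide (k = i)) := by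
    intro i
    simp only [hA]
    exact mu_cyl q hq (D i) (fun k => decide (k = i))
  have hAmu : ∀ i, mu q (A i) = ENNReal.ofReal (p i) := by
    intro i
    rw [hAcyl i]
    have hchildprod : ∏ k ∈ child i, wt q k (decide (k = i))
        = ENNReal.ofReal (∏ k ∈ child i, (1 - q k)) := by
      rw [ENNReal.ofReal_prod_of_nonneg (fun k hk => by linarith [(hq k).2])]
      refine Finset.prod_congr rfl fun k hk => ?_
      rw [decide_eq_false (hchild_ne i k hk), wt]
      simp
    by_cases hir : i = r
    · subst hir
      have hDr : D i = child i := by simp [hD]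
      rw [hDr, hchildprod, ← hroot]
    · have hDi : D i = insert i (child i) := by simp only [hD]; rw [if_neg hir]
      rw [hDi, Finset.prod_insert (hself i)]
      have h1 : wt q i (decide (i = i)) = ENNReal.ofReal (q i) := by
        simp [wt]
      rw [h1, hchildprod, ← ENNReal.ofReal_mul (hq i).1.le]
      congr 1
      by_cases hc : child i = ∅
      · rw [hc, Finset.prod_empty, mul_one, hleaf i hir hc]
      · have hpos : 0 < ∏ k ∈ child i, (1 - q k) :=
          Finset.prod_pos fun k hk => by linarith [(hq k).2]
        rw [hinternal i hir hc, div_mul_cancel₀ _ (ne_of_gt hpos)]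
  -- exclusivity along edges
  have hexcl : ∀ i j, G.Adj i j → A i ∩ A j = ∅ := by
    have key : ∀ a b, G.Adj a b → b ∈ child a → A a ∩ A b = ∅ := by
      intro a b hab hba
      ext ω
      simp only [Set.mem_inter_iff, Set.mem_empty_iff_false, iff_false, not_and]
      intro h1 h2
      simp only [hA, Set.mem_setOf_eq] at h1 h2
      have e1 : ω b = decide (b = a) := h1 b (hchildD a b hba)
      have e2 : ω b = decide (b = b) := h2 b (hDself b (hchild_nr a b hba))
      rw [decide_eq_false (hchild_ne a b hba)] at e1
      simp only [decide_eq_true_eq] at e2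
      simp at e2
      rw [e2] at e1
      simp at e1
    intro i j hij
    rcases hadj i j hij with h | h
    · exact key i j hij h
    · rw [Set.inter_comm]; exact key j i hij.symm h
  -- product formula for compatible families
  have hinterF : ∀ F : Finset (Fin (n+1)),
      (∀ a ∈ F, ∀ b ∈ F, a ≠ b → ¬G.Adj a b) →
      mu q (⋂ j ∈ F, A j) = ∏ j ∈ F, mu q (A j) := by
    intro F hF
    have hkey : ∀ j ∈ F, ∀ k ∈ D j, ((k ∈ F) ↔ (k = j)) := by
      intro j hj k hk
      constructor
      · intro hkF
        by_contra hne
        rcases hDsub j k hk with h | h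
        · exact hne h
        · exact hF j hj k hkF (Ne.symm hne) ((hmem j k).1 h).1
      · rintro rfl; exact hj
    have hset : (⋂ j ∈ F, A j)
        = {ω : Fin (n+1) → Bool | ∀ k ∈ F.biUnion D, ω k = decide (k ∈ F)} := by
      ext ω
      simp only [Set.mem_iInter, hA, Set.mem_setOf_eq, Finset.mem_biUnion]
      constructor
      · rintro h k ⟨j, hj, hk⟩
        rw [show (decide (k ∈ F)) = decide (k = j) from
          decide_eq_decide.mpr (hkey j hj k hk)]
        exact h j hj k hk
      · intro h j hj k hk
        rw [show (decide (k = j)) = decide (k ∈ F) from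
          decide_eq_decide.mpr (hkey j hj k hk).symm]
        exact h k ⟨j, hj, hk⟩
    rw [hset, mu_cyl q hq,
      Finset.prod_biUnion (fun a ha b hb hne => hdisj a b hne (hF a ha b hb hne))]
    refine Finset.prod_congr rfl fun j hj => ?_
    rw [hAcyl j]
    refine Finset.prod_congr rfl fun k hk => ?_
    rw [show (decide (k ∈ F)) = decide (k = j) from
      decide_eq_decide.mpr (hkey j hj k hk)]
  -- the union covers everything
  have hcover : (⋃ i, A i) = Set.univ := by
    refine Set.eq_univ_of_forall fun ω => Set.mem_iUnion.mpr ?_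
    by_cases hS : (Finset.univ.filter fun i => i ≠ r ∧ ω i = true).Nonempty
    · obtain ⟨i, hiS, hmax⟩ := Finset.exists_max_image _ (fun i => G.dist r i) hS
      rw [Finset.mem_filter] at hiS
      refine ⟨i, ?_⟩
      simp only [hA, Set.mem_setOf_eq]
      intro k hk
      rcases hDsub i k hk with rfl | hk'
      · simp [hiS.2.2]
      · rw [decide_eq_false (hchild_ne i k hk')]
        by_contra hkk
        have hkt : ω k = true := by
          cases hkc : ω k
          · rw [hkc] at hkk; exact absurd rfl hkk
          · rfl
        have hkS : k ∈ Finset.univ.filter fun i => i ≠ r ∧ ω i = true :=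
          Finset.mem_filter.mpr ⟨Finset.mem_univ k, hchild_nr i k hk', hkt⟩
        have hle := hmax k hkS
        have hd := ((hmem i k).1 hk').2
        omega
    · refine ⟨r, ?_⟩
      simp only [hA, Set.mem_setOf_eq]
      intro k hk
      have hDr : D r = child r := by simp [hD]
      rw [hDr] at hk
      rw [decide_eq_false (hchild_nr r k hk)]
      by_contra hkk
      have hkt : ω k = true := by
        cases hkc : ω k
        · rw [hkc] at hkk; exact absurd rfl hkk
        · rfl
      exact hS ⟨k, Finset.mem_filter.mpr ⟨Finset.mem_univ k, hchild_nr r k hk, hkt⟩⟩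
  -- total mass one
  have hprob : IsProbabilityMeasure (mu q) := by
    constructor
    have huniv : (Set.univ : Set (Fin (n+1) → Bool))
        = {ω : Fin (n+1) → Bool | ∀ k ∈ (∅ : Finset (Fin (n+1))), ω k = true} := by
      ext ω; simp
    rw [huniv, mu_cyl q hq, Finset.prod_empty]
  refine ⟨Fin (n+1) → Bool, inferInstance, mu q, hprob, A, ⟨?_, ?_⟩, hAmu, ?_, ?_⟩
  · exact fun i => MeasurableSet.of_discrete
  · intro i S hS
    by_cases hgood : ∀ a ∈ S, ∀ b ∈ S, a ≠ b → ¬G.Adj a b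
    · have hiS : i ∉ S := fun h => (hS i h).1 rfl
      have hF : ∀ a ∈ insert i S, ∀ b ∈ insert i S, a ≠ b → ¬G.Adj a b := by
        intro a ha b hb hne
        rcases Finset.mem_insert.mp ha with rfl | ha'
        · rcases Finset.mem_insert.mp hb with rfl | hb'
          · exact absurd rfl hne
          · exact (hS b hb').2
        · rcases Finset.mem_insert.mp hb with rfl | hb'
          · intro hadj'; exact (hS a ha').2 hadj'.symm
          · exact hgood a ha' b hb' hne
      have e1 : (A i ∩ ⋂ j ∈ S, A j) = ⋂ j ∈ insert i S, A j :=
        (Finset.set_biInter_insert i S A).symm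
      rw [e1, hinterF _ hF, Finset.prod_insert hiS, hinterF _ hgood]
    · push_neg at hgood
      obtain ⟨a, ha, b, hb, hne, hadj'⟩ := hgood
      have hsub : (⋂ j ∈ S, A j) = ∅ := by
        refine Set.eq_empty_iff_forall_notMem.mpr fun ω hω => ?_
        have hω' := Set.mem_iInter₂.mp hω
        have : ω ∈ A a ∩ A b := ⟨hω' a ha, hω' b hb⟩
        rw [hexcl a b hadj'] at this
        exact this
      rw [hsub, Set.inter_empty, measure_empty, mul_zero]
  · intro i j hij
    rw [hexcl i j hij]
    exact measure_empty
  · rw [hcover]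
    exact measure_univ
end

section
/- For n ≥ 3, consider n events A_1, ..., A_n where A_i depends only on independent random variables X_i and X_{i+1 mod n}. Define A_i = {1/2 ≤ X_i ≤ 1 and 0 ≤ X_{(i mod n)+1} < 1/2}, where X_1,...,X_n are independent uniform on [0,1]. Then the A_i are pairwise disjoint whenever they are neighbors on the cycle (indeed A_i ∩ A_{i+1} = ∅), Pr(A_i) = 1/4 for all i, and Pr(∪_{i=1}^n A_i) < 1. -/
open MeasureTheory

lemma half_Icc : (volume.restrict (Set.Icc (0:ℝ) 1)) (Set.Icc (1/2) 1) = ENNReal.ofReal (1/2) := by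
  rw [Measure.restrict_apply measurableSet_Icc,
    Set.inter_eq_left.mpr (Set.Icc_subset_Icc (by norm_num) le_rfl), Real.volume_Icc]
  norm_num

lemma half_Ico : (volume.restrict (Set.Icc (0:ℝ) 1)) (Set.Ico 0 (1/2)) = ENNReal.ofReal (1/2) := by
  rw [Measure.restrict_apply measurableSet_Ico,
    Set.inter_eq_left.mpr (Set.Ico_subset_Icc_self.trans (Set.Icc_subset_Icc le_rfl (by norm_num))), Real.volume_Ico]
  norm_num

instance : IsProbabilityMeasure (volume.restrict (Set.Icc (0:ℝ) 1)) :=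
  ⟨by rw [Measure.restrict_apply_univ, Real.volume_Icc]; norm_num⟩

instance inst_s8 (m : ℕ) : IsProbabilityMeasure (cubeMeasure m) := by
  unfold cubeMeasure; infer_instance

theorem stmt8 {n : ℕ} [NeZero n] (hn : 3 ≤ n)
    (A : Fin n → Set (Fin n → ℝ))
    (hA : ∀ i, A i = {x | 1/2 ≤ x i ∧ x i ≤ 1 ∧ 0 ≤ x (i+1) ∧ x (i+1) < 1/2}) :
    (∀ i, A i ∩ A (i+1) = ∅) ∧
    (∀ i, cubeMeasure n (A i) = 1/4) ∧
    cubeMeasure n (⋃ i, A i) < 1 := by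
  have hone : (1 : Fin n) ≠ 0 := by
    have : n ≠ 1 := by omega
    simpa [Fin.one_eq_zero_iff] using this
  have hne : ∀ i : Fin n, i ≠ i + 1 := by
    intro i h
    exact hone (by simpa using (left_eq_add.mp h))
  refine ⟨?_, ?_, ?_⟩
  · intro i
    ext x
    simp only [hA, Set.mem_inter_iff, Set.mem_setOf_eq, Set.mem_empty_iff_false, iff_false]
    rintro ⟨⟨_, _, _, h4⟩, ⟨h5, _, _, _⟩⟩
    exact absurd h5 (not_le.mpr h4)
  · intro i
    have hset : A i = Set.pi Set.univ (fun j =>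
        if j = i then Set.Icc (1/2:ℝ) 1 else if j = i+1 then Set.Ico (0:ℝ) (1/2) else Set.univ) := by
      ext x
      simp only [hA, Set.mem_setOf_eq, Set.mem_pi, Set.mem_univ, true_implies]
      constructor
      · rintro ⟨h1, h2, h3, h4⟩ j
        split_ifs with hj hj'
        · subst hj; exact ⟨h1, h2⟩
        · subst hj'; exact ⟨h3, h4⟩
        · trivial
      · intro h
        have h1 := h i
        have h2 := h (i+1)
        rw [if_pos rfl] at h1
        rw [if_neg (Ne.symm (hne i)), if_pos rfl] at h2
        exact ⟨h1.1, h1.2, h2.1, h2.2⟩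
    rw [hset]
    show Measure.pi _ _ = 1/4
    rw [Measure.pi_pi]
    have hprod : ∏ j : Fin n, (volume.restrict (Set.Icc (0:ℝ) 1))
        ((fun j => if j = i then Set.Icc (1/2:ℝ) 1 else if j = i+1 then Set.Ico (0:ℝ) (1/2) else Set.univ) j)
        = ∏ j ∈ ({i, i+1} : Finset (Fin n)), (volume.restrict (Set.Icc (0:ℝ) 1))
        (if j = i then Set.Icc (1/2:ℝ) 1 else if j = i+1 then Set.Ico (0:ℝ) (1/2) else Set.univ) := by
      refine (Finset.prod_subset (Finset.subset_univ _) ?_).symm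
      intro j _ hj
      simp only [Finset.mem_insert, Finset.mem_singleton, not_or] at hj
      simp only [if_neg hj.1, if_neg hj.2]
      exact measure_univ
    rw [hprod, Finset.prod_pair (hne i), if_pos rfl, if_neg (Ne.symm (hne i)), if_pos rfl,
      half_Icc, half_Ico, ← ENNReal.ofReal_mul (by norm_num)]
    rw [show (1/2 : ℝ) * (1/2) = 1/4 by norm_num]
    rw [ENNReal.ofReal_div_of_pos (by norm_num)]
    simp
  · set B := Set.pi Set.univ (fun _ : Fin n => Set.Ico (0:ℝ) (1/2)) with hBdef
    have hBmeas : MeasurableSet B := MeasurableSet.univ_pi (fun _ => measurableSet_Ico)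
    have hB : cubeMeasure n B = ENNReal.ofReal (1/2) ^ n := by
      show Measure.pi _ _ = _
      rw [Measure.pi_pi]
      simp only [half_Ico, Finset.prod_const, Finset.card_univ, Fintype.card_fin]
    have hsub : (⋃ i, A i) ⊆ Bᶜ := by
      intro x hx hxB
      obtain ⟨i, hi⟩ := Set.mem_iUnion.mp hx
      rw [hA] at hi
      have hxi := hxB i (Set.mem_univ i)
      exact absurd hi.1 (not_le.mpr hxi.2)
    calc cubeMeasure n (⋃ i, A i) ≤ cubeMeasure n Bᶜ := measure_mono hsub
      _ = 1 - cubeMeasure n B := prob_compl_eq_one_sub hBmeas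
      _ < 1 := ENNReal.sub_lt_self ENNReal.one_ne_top one_ne_zero
          (by rw [hB]; exact pow_ne_zero _ (by simp))
end

section
/- Let n ≥ 3 and let B_1,...,B_n be measurable subsets of [0,1]^n such that B_i depends only on coordinates i and i+1 (mod n), μ(B_i) = q for all i with q > 1/4, and μ(∪_i B_i) = 1. Then there exist distinct indices i, j with i ∈ {j−1, j, j+1} mod n (i.e., B_i and B_j are neighbors on the cycle) such that μ(B_i ∩ B_j) > 0. In other words, for q = 1/4 + ε with ε > 0 sufficiently small, no exclusive cylinder set conforming with the n-cycle bigraph achieves measure vector (q,...,q). -/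
/-!
Fix a coordinate `k`; the sets `B (k-1)` and `B k` both depend on `x k` and otherwise on disjoint
coordinates. Let `Q k` be the set of `s` for which the slice `{x k = s}` of `B k` has positive
measure (the `fiberSupport` of the two-variable shadow of `B k`), and `P k` the same for
`B (k-1)`. By Fubini `μ (B (k-1) ∩ B k)` is the integral over `s` of the product of the two slice
measures, so exclusivity makes `P k ∩ Q k` null, and `q = μ (B (k-1)) ≤ |P k| ≤ |[0,1] \ Q k|`.
The box `∏ k, [0,1] \ Q k` therefore has positive measure, yet it meets every `B k` in a null
set, so the `B k` cannot cover the cube.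
-/

open MeasureTheory

open ProbabilityTheory Set

section FiberSupport

variable {α β γ : Type*} [MeasurableSpace α] [MeasurableSpace β] [MeasurableSpace γ]
  {μ : Measure α} {ν : Measure β} {ρ : Measure γ}

def fiberSupport (ν : Measure β) (F : Set (α × β)) : Set α :=
  {a | ν (Prod.mk a ⁻¹' F) ≠ 0}

def fiberedProd (E : Set (α × β)) (F : Set (α × γ)) : Set (α × β × γ) :=
  {p | (p.1, p.2.1) ∈ E ∧ (p.1, p.2.2) ∈ F}

theorem MeasurableSet.fiberedProd {E : Set (α × β)} {F : Set (α × γ)} (hE : MeasurableSet E)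
    (hF : MeasurableSet F) : MeasurableSet (fiberedProd E F) :=
  (measurable_fst.prodMk measurable_snd.fst hE).inter (measurable_fst.prodMk measurable_snd.snd hF)

theorem measurableSet_fiberSupport [SFinite ν] {F : Set (α × β)} (hF : MeasurableSet F) :
    MeasurableSet (fiberSupport ν F) :=
  (measurable_measure_prodMk_left (ν := ν) hF) (measurableSet_singleton 0).compl

theorem prod_inter_compl_fiberSupport_eq_zero [SFinite ν] {F : Set (α × β)}
    (hF : MeasurableSet F) : μ.prod ν (F ∩ (fiberSupport ν F)ᶜ ×ˢ univ) = 0 := by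
  have hm := hF.inter ((measurableSet_fiberSupport (ν := ν) hF).compl.prod MeasurableSet.univ)
  refine (Measure.measure_prod_null hm).2 (Filter.Eventually.of_forall fun a => ?_)
  by_cases ha : a ∈ fiberSupport ν F
  · simp [ha]
  · exact measure_mono_null (preimage_mono inter_subset_left) (by simpa [fiberSupport] using ha)

theorem prod_le_measure_fiberSupport [IsProbabilityMeasure ν] {E : Set (α × β)}
    (hE : MeasurableSet E) : μ.prod ν E ≤ μ (fiberSupport ν E) := by
  rw [Measure.prod_apply hE, ← lintegral_indicator_one (measurableSet_fiberSupport hE)]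
  refine lintegral_mono fun a => ?_
  by_cases ha : a ∈ fiberSupport ν E
  · simpa [ha] using prob_le_one
  · simp_all [fiberSupport]

theorem measure_fiberSupport_inter_eq_zero [SFinite ν] [SFinite ρ] {E : Set (α × β)}
    {F : Set (α × γ)} (hE : MeasurableSet E) (hF : MeasurableSet F)
    (hEF : μ.prod (ν.prod ρ) (fiberedProd E F) = 0) :
    μ (fiberSupport ν E ∩ fiberSupport ρ F) = 0 := by
  rw [Measure.measure_prod_null (hE.fiberedProd hF)] at hEF
  rw [measure_eq_zero_iff_ae_notMem]
  filter_upwards [hEF] with a ha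
  have hfiber : Prod.mk a ⁻¹' fiberedProd E F = (Prod.mk a ⁻¹' E) ×ˢ (Prod.mk a ⁻¹' F) := rfl
  simp only [hfiber, Measure.prod_prod, Pi.zero_apply, mul_eq_zero] at ha
  simp only [fiberSupport, mem_inter_iff, mem_ofPred_eq]
  tauto

theorem prod_le_measure_compl_fiberSupport [IsProbabilityMeasure ν] [SFinite ρ]
    {E : Set (α × β)} {F : Set (α × γ)} (hE : MeasurableSet E) (hF : MeasurableSet F)
    (hEF : μ.prod (ν.prod ρ) (fiberedProd E F) = 0) :
    μ.prod ν E ≤ μ (fiberSupport ρ F)ᶜ :=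
  calc μ.prod ν E ≤ μ (fiberSupport ν E) := prod_le_measure_fiberSupport hE
    _ ≤ μ (fiberSupport ν E ∩ fiberSupport ρ F) + μ (fiberSupport ν E \ fiberSupport ρ F) :=
      measure_le_inter_add_sdiff _ _ _
    _ ≤ μ (fiberSupport ρ F)ᶜ := by
      rw [measure_fiberSupport_inter_eq_zero hE hF hEF, zero_add]
      exact measure_mono (sdiff_subset_compl _ _)

end FiberSupport

theorem measure_eq_zero_of_inter_eq_zero_of_iUnion_eq_one {Ω ι : Type*} [MeasurableSpace Ω]
    [Countable ι] {μ : Measure Ω} [IsProbabilityMeasure μ] {A : ι → Set Ω} {D : Set Ω}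
    (hA : ∀ i, MeasurableSet (A i)) (hcover : μ (⋃ i, A i) = 1) (hD : ∀ i, μ (D ∩ A i) = 0) :
    μ D = 0 := by
  have hcompl : μ (⋃ i, A i)ᶜ = 0 := (prob_compl_eq_zero_iff (.iUnion hA)).2 hcover
  refine le_antisymm ?_ zero_le
  calc μ D ≤ μ (D ∩ ⋃ i, A i) + μ (D \ ⋃ i, A i) := measure_le_inter_add_sdiff _ _ _
    _ = 0 := by
      rw [inter_iUnion, measure_iUnion_null hD, measure_mono_null (sdiff_subset_compl _ _) hcompl,
        add_zero]

local notation "μI" => volume.restrict (Icc (0 : ℝ) 1)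

instance : IsProbabilityMeasure μI := ⟨by simp⟩

namespace cubeMeasure

variable {m : ℕ}

instance : IsProbabilityMeasure (cubeMeasure m) := by
  unfold cubeMeasure; infer_instance

theorem iIndepFun_eval : iIndepFun (fun j (x : Fin m → ℝ) => x j) (cubeMeasure m) :=
  iIndepFun_pi (X := fun _ => id) fun _ => aemeasurable_id

theorem map_eval (a : Fin m) : (cubeMeasure m).map (fun x => x a) = μI :=
  (measurePreserving_eval _ a).map_eq

theorem map_pair {a b : Fin m} (hab : a ≠ b) :
    (cubeMeasure m).map (fun x => (x a, x b)) = (μI).prod μI := by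
  rw [(iIndepFun_eval.indepFun hab).map_prod_eq_prod_map_map (measurable_pi_apply a).aemeasurable
    (measurable_pi_apply b).aemeasurable, map_eval, map_eval]

theorem map_triple {a b c : Fin m} (hab : a ≠ b) (hac : a ≠ c) (hbc : b ≠ c) :
    (cubeMeasure m).map (fun x => (x a, (x b, x c))) = (μI).prod ((μI).prod μI) := by
  have := (iIndepFun_eval.indepFun_prodMk measurable_pi_apply b c a hab.symm hac.symm).symm
  rw [this.map_prod_eq_prod_map_map (measurable_pi_apply a).aemeasurable
    ((measurable_pi_apply b).prodMk (measurable_pi_apply c)).aemeasurable, map_eval, map_pair hbc]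

theorem measure_preimage_le_compl_fiberSupport {a b c : Fin m} (hab : a ≠ b) (hac : a ≠ c)
    (hbc : b ≠ c) {E F : Set (ℝ × ℝ)} (hE : MeasurableSet E) (hF : MeasurableSet F)
    (hEF : cubeMeasure m ((fun x => (x a, x b)) ⁻¹' E ∩ (fun x => (x a, x c)) ⁻¹' F) = 0) :
    cubeMeasure m ((fun x => (x a, x b)) ⁻¹' E) ≤ μI (fiberSupport μI F)ᶜ := by
  rw [← Measure.map_apply (by fun_prop) hE, map_pair hab]
  refine prod_le_measure_compl_fiberSupport hE hF ?_
  rwa [← map_triple hab hac hbc, Measure.map_apply (by fun_prop) (hE.fiberedProd hF)]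

theorem measure_preimage_inter_compl_fiberSupport {a c : Fin m} (hac : a ≠ c) {F : Set (ℝ × ℝ)}
    (hF : MeasurableSet F) :
    cubeMeasure m ((fun x => (x a, x c)) ⁻¹' (F ∩ (fiberSupport μI F)ᶜ ×ˢ univ)) = 0 := by
  rw [← Measure.map_apply (by fun_prop)
    (hF.inter ((measurableSet_fiberSupport hF).compl.prod .univ)), map_pair hac]
  exact prod_inter_compl_fiberSupport_eq_zero hF

end cubeMeasure

theorem Fin.neighbors_pairwise_ne {n : ℕ} [NeZero n] (hn : 3 ≤ n) (k : Fin n) :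
    k ≠ k + 1 ∧ k - 1 ≠ k + 1 ∧ k - 1 ≠ k := by
  have h1 : (1 : Fin n) ≠ 0 := by
    simp [Fin.ext_iff, Nat.mod_eq_of_lt (show 1 < n by omega)]
  have h2 : (1 + 1 : Fin n) ≠ 0 := by
    simp [Fin.ext_iff, Fin.val_add, Nat.mod_eq_of_lt (show 1 < n by omega),
      Nat.mod_eq_of_lt (show 2 < n by omega)]
  refine ⟨fun h => h1 ?_, fun h => h2 ?_, fun h => h1 ?_⟩
  · simpa using h
  · rw [sub_eq_iff_eq_add, add_assoc] at h; simpa using h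
  · rw [sub_eq_iff_eq_add] at h; simpa using h

theorem DependsOnlyOn.exists_preimage_pair {m : ℕ} {A : Set (Fin m → ℝ)} {a b : Fin m}
    (hA : DependsOnlyOn A {a, b}) (hAm : MeasurableSet A) :
    ∃ G : Set (ℝ × ℝ), MeasurableSet G ∧ A = (fun x => (x a, x b)) ⁻¹' G := by
  let emb : ℝ × ℝ → Fin m → ℝ := fun p => Function.update (Function.update 0 a p.1) b p.2
  refine ⟨emb ⁻¹' A, (by fun_prop : Measurable emb) hAm, ?_⟩
  ext x
  refine hA x _ ?_
  intro j hj
  by_cases hjb : j = b <;> simp_all [emb]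

theorem stmt9 {n : ℕ} [NeZero n] (hn : 3 ≤ n) (q : ℝ) (hq : 1/4 < q)
    (B : Fin n → Set (Fin n → ℝ))
    (hmeas : ∀ i, MeasurableSet (B i))
    (hdep : ∀ i, DependsOnlyOn (B i) {i, i+1})
    (hB : ∀ i, cubeMeasure n (B i) = ENNReal.ofReal q)
    (hfull : cubeMeasure n (⋃ i, B i) = 1) :
    ∃ i j : Fin n, i ≠ j ∧ (j = i + 1 ∨ i = j + 1) ∧
      0 < cubeMeasure n (B i ∩ B j) := by
  by_contra! hcon
  have hexcl (k : Fin n) : cubeMeasure n (B (k - 1) ∩ B k) = 0 :=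
    nonpos_iff_eq_zero.mp (hcon _ _ (Fin.neighbors_pairwise_ne hn k).2.2
      (Or.inl (sub_add_cancel k 1).symm))
  choose F hFm hBF using fun k => (hdep k).exists_preimage_pair (hmeas k)
  set D := pi univ fun k => (fiberSupport μI (F k))ᶜ
  have hQ (k : Fin n) : ENNReal.ofReal q ≤ μI (fiberSupport μI (F k))ᶜ := by
    obtain ⟨hk1, hkk, hk0⟩ := Fin.neighbors_pairwise_ne hn k
    have hdep' : DependsOnlyOn (B (k - 1)) {k, k - 1} := by
      simpa [Set.pair_comm] using hdep (k - 1)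
    obtain ⟨E, hEm, hBE⟩ := hdep'.exists_preimage_pair (hmeas _)
    rw [← hB (k - 1), hBE]
    refine cubeMeasure.measure_preimage_le_compl_fiberSupport hk0.symm hk1 hkk hEm (hFm k) ?_
    rw [← hBE, ← hBF k]
    exact hexcl k
  have hbox (k : Fin n) : cubeMeasure n (D ∩ B k) = 0 := by
    refine measure_mono_null ?_ (cubeMeasure.measure_preimage_inter_compl_fiberSupport
      (Fin.neighbors_pairwise_ne hn k).1 (hFm k))
    rw [hBF k]
    exact fun x hx => ⟨hx.2, hx.1 k (mem_univ k), mem_univ _⟩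
  have hpos : 0 < cubeMeasure n D := by
    have hq0 : 0 < ENNReal.ofReal q := ENNReal.ofReal_pos.2 (by linarith)
    rw [pos_iff_ne_zero, cubeMeasure, Measure.pi_pi, Finset.prod_ne_zero_iff]
    exact fun k _ => (hq0.trans_le (hQ k)).ne'
  exact hpos.ne' (measure_eq_zero_of_inter_eq_zero_of_iUnion_eq_one hmeas hfull hbox)
end

section
/- Key counting step in the cycle gapfulness proof: let B_1, ..., B_n ⊆ [0,1]^n, where B_i depends only on coordinates i and i+1 (mod n), and suppose μ(B_i) > 1/4 for each i. For each i let Δ'_i ⊆ [0,1] and Δ_{i+1} ⊆ [0,1] be minimal measurable sets with μ(B̃_i \ (Δ'_i × Δ_{i+1})) = 0, where B̃_i ⊆ [0,1]^{{i,i+1}} is the base of B_i, and set x_i = μ(Δ_i), x'_i = μ(Δ'_i). Then x'_i x_{i+1} > 1/4 for all i, hence ∏_{i=1}^n (x_i x'_i) > 4^{−n}, hence there exists i with x_i x'_i > 1/4, hence x_i + x'_i > 1 and μ(Δ_i ∩ Δ'_i) > 0. -/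
/-!
Up to a null set, `B i` lies in the cylinder over the rectangle `Δ' i × Δ (i+1)`, whose cube
measure is `x'ᵢ x_{i+1}`; hence `x'ᵢ x_{i+1} > 1/4`. Shifting the index cyclically,
`∏ xᵢ x'ᵢ = ∏ x'ᵢ x_{i+1} > 4⁻ⁿ`, so some factor `xᵢ x'ᵢ` exceeds `1/4`. By AM–GM
`xᵢ + x'ᵢ > 1`, and two subsets of `[0,1]` whose measures add up to more than `1` must meet in
positive measure.
-/

open MeasureTheory

lemma Fin.self_ne_add_one {n : ℕ} [NeZero n] (hn : 2 ≤ n) (i : Fin n) : i ≠ i + 1 := by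
  rw [ne_eq, left_eq_add, Fin.one_eq_zero_iff]
  omega

lemma Fin.prod_mul_eq_prod_mul_add_one {n : ℕ} [NeZero n] {M : Type*} [CommMonoid M]
    (f g : Fin n → M) : ∏ i, f i * g i = ∏ i, g i * f (i + 1) := by
  rw [Finset.prod_mul_distrib, Finset.prod_mul_distrib, mul_comm,
    ← Equiv.prod_comp (Equiv.addRight 1) f]
  rfl

lemma cubeMeasure_setOf_mem_and_mem {n : ℕ} {i j : Fin n} (hij : i ≠ j) {A C : Set ℝ}
    (hA : A ⊆ Set.Icc 0 1) (hC : C ⊆ Set.Icc 0 1) :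
    cubeMeasure n {x | x i ∈ A ∧ x j ∈ C} = volume A * volume C := by
  classical
  let s : Fin n → Set ℝ := fun k => if k = i then A else if k = j then C else Set.univ
  have hset : {x : Fin n → ℝ | x i ∈ A ∧ x j ∈ C} = Set.univ.pi s := by
    ext x
    simp only [Set.mem_ofPred_eq, Set.mem_univ_pi, s]
    refine ⟨fun ⟨hi, hj⟩ k => ?_, fun h => ⟨by simpa using h i, by simpa [hij.symm] using h j⟩⟩
    split_ifs with hki hkj
    exacts [hki ▸ hi, hkj ▸ hj, trivial]
  rw [hset, cubeMeasure, Measure.pi_pi, Fintype.prod_eq_mul i j hij]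
  · simp [s, hij.symm, Measure.restrict_apply' measurableSet_Icc,
      Set.inter_eq_self_of_subset_left hA, Set.inter_eq_self_of_subset_left hC]
  · rintro k ⟨hki, hkj⟩
    simp [s, hki, hkj]

lemma exists_lt_of_pow_card_lt_prod {ι R : Type*} [Fintype ι] [CommMonoidWithZero R]
    [LinearOrder R] [ZeroLEOneClass R] [PosMulMono R] {f : ι → R} {c : R}
    (h : c ^ Fintype.card ι < ∏ i, f i) (hf : ∀ i, 0 ≤ f i) : ∃ i, c < f i := by
  by_contra! hle
  exact h.not_ge ((Finset.prod_le_prod (fun i _ => hf i) fun i _ => hle i).trans_eq (by simp))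

lemma one_lt_add_of_quarter_lt_mul {K : Type*} [Field K] [LinearOrder K] [IsStrictOrderedRing K]
    {a b : K} (ha : 0 ≤ a) (hb : 0 ≤ b) (h : 1 / 4 < a * b) :
    1 < a + b := by
  nlinarith [sq_nonneg (a - b)]

lemma measure_inter_pos_of_measureReal_lt_add {α : Type*} [MeasurableSpace α] {μ : Measure α}
    {s t u : Set α} (ht : MeasurableSet t) (hsu : s ⊆ u) (htu : t ⊆ u) (hu : μ u ≠ ⊤)
    (h : μ.real u < μ.real s + μ.real t) : 0 < μ (s ∩ t) := by
  rw [pos_iff_ne_zero]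
  intro h0
  have hs : μ s ≠ ⊤ := measure_ne_top_of_subset hsu hu
  have ht' : μ t ≠ ⊤ := measure_ne_top_of_subset htu hu
  have hunion := measureReal_union_add_inter ht hs ht'
  have hle : μ.real (s ∪ t) ≤ μ.real u := measureReal_mono (Set.union_subset hsu htu) hu
  rw [(measureReal_eq_zero_iff (measure_ne_top_of_subset Set.inter_subset_left hs)).mpr h0]
    at hunion
  linarith

theorem stmt10_general {n : ℕ} [NeZero n] (hn : 3 ≤ n)
    (B : Fin n → Set (Fin n → ℝ))
    (hB : ∀ i, 1/4 < cubeMeasure n (B i))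
    (Δ Δ' : Fin n → Set ℝ)
    (hΔ'meas : ∀ i, MeasurableSet (Δ' i))
    (hΔsub : ∀ i, Δ i ⊆ Set.Icc 0 1) (hΔ'sub : ∀ i, Δ' i ⊆ Set.Icc 0 1)
    (hnull : ∀ i, cubeMeasure n (B i \ {x | x i ∈ Δ' i ∧ x (i+1) ∈ Δ (i+1)}) = 0) :
    (∀ i, (1:ℝ)/4 < (volume (Δ' i)).toReal * (volume (Δ (i+1))).toReal) ∧
    ((1:ℝ)/4)^n < (∏ i : Fin n, (volume (Δ i)).toReal * (volume (Δ' i)).toReal) ∧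
    ∃ i : Fin n,
      (1:ℝ)/4 < (volume (Δ i)).toReal * (volume (Δ' i)).toReal ∧
      1 < (volume (Δ i)).toReal + (volume (Δ' i)).toReal ∧
      0 < volume (Δ i ∩ Δ' i) := by
  have hfin : ∀ {A : Set ℝ}, A ⊆ Set.Icc 0 1 → volume A ≠ ⊤ := fun hA =>
    measure_ne_top_of_subset hA measure_Icc_lt_top.ne
  have hrect : ∀ i, (1:ℝ)/4 < (volume (Δ' i)).toReal * (volume (Δ (i+1))).toReal := by
    intro i
    have hle := measure_mono_ae (ae_le_set.2 (hnull i))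
    rw [cubeMeasure_setOf_mem_and_mem (Fin.self_ne_add_one (by omega) i) (hΔ'sub i)
      (hΔsub (i+1))] at hle
    rw [← ENNReal.toReal_mul]
    simpa using ENNReal.toReal_strict_mono (ENNReal.mul_ne_top (hfin (hΔ'sub i))
      (hfin (hΔsub (i+1)))) ((hB i).trans_le hle)
  have hprod : ((1:ℝ)/4)^n < ∏ i : Fin n, (volume (Δ i)).toReal * (volume (Δ' i)).toReal := by
    rw [Fin.prod_mul_eq_prod_mul_add_one]
    calc ((1:ℝ)/4)^n = ∏ _i : Fin n, (1:ℝ)/4 := by simp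
      _ < _ := Finset.prod_lt_prod_of_nonempty (fun _ _ => by norm_num) (fun i _ => hrect i)
          Finset.univ_nonempty
  obtain ⟨i, hi⟩ := exists_lt_of_pow_card_lt_prod (by rwa [Fintype.card_fin]) fun _ => by
    positivity
  have hsum := one_lt_add_of_quarter_lt_mul ENNReal.toReal_nonneg ENNReal.toReal_nonneg hi
  refine ⟨hrect, hprod, i, hi, hsum, measure_inter_pos_of_measureReal_lt_add (hΔ'meas i)
    (hΔsub i) (hΔ'sub i) measure_Icc_lt_top.ne ?_⟩
  simpa [Measure.real] using hsum

theorem stmt10 {n : ℕ} [NeZero n] (hn : 3 ≤ n)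
    (B : Fin n → Set (Fin n → ℝ)) (hmeas : ∀ i, MeasurableSet (B i))
    (hdep : ∀ i, DependsOnlyOn (B i) {i, i+1})
    (hB : ∀ i, 1/4 < cubeMeasure n (B i))
    (Δ Δ' : Fin n → Set ℝ)
    (hΔmeas : ∀ i, MeasurableSet (Δ i)) (hΔ'meas : ∀ i, MeasurableSet (Δ' i))
    (hΔsub : ∀ i, Δ i ⊆ Set.Icc 0 1) (hΔ'sub : ∀ i, Δ' i ⊆ Set.Icc 0 1)
    (hnull : ∀ i, cubeMeasure n (B i \ {x | x i ∈ Δ' i ∧ x (i+1) ∈ Δ (i+1)}) = 0)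
    (hmin' : ∀ i, ∀ Γ : Set ℝ, MeasurableSet Γ →
      cubeMeasure n (B i \ {x | x i ∈ Γ}) = 0 → volume (Δ' i) ≤ volume Γ)
    (hmin : ∀ i, ∀ Γ : Set ℝ, MeasurableSet Γ →
      cubeMeasure n (B i \ {x | x (i+1) ∈ Γ}) = 0 → volume (Δ (i+1)) ≤ volume Γ) :
    (∀ i, (1:ℝ)/4 < (volume (Δ' i)).toReal * (volume (Δ (i+1))).toReal) ∧
    ((1:ℝ)/4)^n < (∏ i : Fin n, (volume (Δ i)).toReal * (volume (Δ' i)).toReal) ∧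
    ∃ i : Fin n,
      (1:ℝ)/4 < (volume (Δ i)).toReal * (volume (Δ' i)).toReal ∧
      1 < (volume (Δ i)).toReal + (volume (Δ' i)).toReal ∧
      0 < volume (Δ i ∩ Δ' i) :=
  stmt10_general hn B hB Δ Δ' hΔ'meas hΔsub hΔ'sub hnull
end

section
/- Monotonicity of Shearer's ratio: Let G = ([n],E) be a dependency graph of events A_1,...,A_n and also of an exclusive event set B_1,...,B_n with Pr(A_i) = Pr(B_i) = p_i for all i. For S ⊆ [n] write α(S) = Pr(∩_{i∈S} complement of A_i) and β(S) = Pr(∩_{i∈S} complement of B_i). Assume β([n]) > 0. Then for all S_1 ⊆ S_2 ⊆ [n], α(S_1)/β(S_1) ≤ α(S_2)/β(S_2). In particular, α(S)/β(S) ≥ 1 for all S, so α([n]) ≥ β([n]). -/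
open MeasureTheory

open scoped Classical

lemma indep_mixed {Ω : Type} [MeasurableSpace Ω] (μ : Measure Ω) [IsProbabilityMeasure μ]
    {n : ℕ} (G : SimpleGraph (Fin n)) (A : Fin n → Set Ω) (hA : IsDepGraph μ G A)
    (i : Fin n) (T : Finset (Fin n)) :
    ∀ S : Finset (Fin n), (∀ j ∈ S, j ≠ i ∧ ¬ G.Adj i j) →
      (∀ j ∈ T, j ≠ i ∧ ¬ G.Adj i j) →
      μ (A i ∩ ((⋂ j ∈ S, A j) ∩ ⋂ j ∈ T, (A j)ᶜ)) =
        μ (A i) * μ ((⋂ j ∈ S, A j) ∩ ⋂ j ∈ T, (A j)ᶜ) := by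
  induction T using Finset.induction_on with
  | empty =>
      intro S hS _
      simpa using hA.2 i S hS
  | @insert k T hk IH =>
      intro S hS hT
      have hTk := hT k (Finset.mem_insert_self k T)
      have hT' : ∀ j ∈ T, j ≠ i ∧ ¬ G.Adj i j := fun j hj => hT j (Finset.mem_insert_of_mem hj)
      have hmC : MeasurableSet (A k) := hA.1 k
      set X := ⋂ j ∈ S, A j with hX
      set Y := ⋂ j ∈ T, (A j)ᶜ with hY
      have hbi : (⋂ j ∈ insert k T, (A j)ᶜ) = (A k)ᶜ ∩ Y := Finset.set_biInter_insert _ _ _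
      rw [hbi]
      have hins : (⋂ j ∈ insert k S, A j) = A k ∩ X := Finset.set_biInter_insert _ _ _
      have h1 : μ (A i ∩ (X ∩ Y)) = μ (A i) * μ (X ∩ Y) := IH S hS hT'
      have h2 : μ (A i ∩ ((A k ∩ X) ∩ Y)) = μ (A i) * μ ((A k ∩ X) ∩ Y) := by
        have h := IH (insert k S) ?_ hT'
        · rwa [hins] at h
        · intro j hj
          rcases Finset.mem_insert.mp hj with rfl | hj
          · exact hTk
          · exact hS j hj
      have e1 : (A i ∩ (X ∩ Y)) ∩ A k = A i ∩ ((A k ∩ X) ∩ Y) := by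
        ext x; simp only [Set.mem_inter_iff]; tauto
      have e2 : (A i ∩ (X ∩ Y)) \ A k = A i ∩ (X ∩ ((A k)ᶜ ∩ Y)) := by
        ext x; simp only [Set.mem_diff, Set.mem_inter_iff, Set.mem_compl_iff]; tauto
      have e3 : (X ∩ Y) ∩ A k = (A k ∩ X) ∩ Y := by
        ext x; simp only [Set.mem_inter_iff]; tauto
      have e4 : (X ∩ Y) \ A k = X ∩ ((A k)ᶜ ∩ Y) := by
        ext x; simp only [Set.mem_diff, Set.mem_inter_iff, Set.mem_compl_iff]; tauto
      have s1 := measure_inter_add_diff (μ := μ) (A i ∩ (X ∩ Y)) hmC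
      have s2 := measure_inter_add_diff (μ := μ) (X ∩ Y) hmC
      rw [e1, e2] at s1
      rw [e3, e4] at s2
      have key : μ (A i) * μ ((A k ∩ X) ∩ Y) + μ (A i ∩ (X ∩ ((A k)ᶜ ∩ Y))) =
          μ (A i) * μ ((A k ∩ X) ∩ Y) + μ (A i) * μ (X ∩ ((A k)ᶜ ∩ Y)) := by
        rw [← h2, s1, h1, ← s2, mul_add, h2]
      exact (ENNReal.add_right_inj (ENNReal.mul_ne_top (measure_ne_top μ _) (measure_ne_top μ _))).mp key

lemma indep_compl {Ω : Type} [MeasurableSpace Ω] (μ : Measure Ω) [IsProbabilityMeasure μ]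
    {n : ℕ} (G : SimpleGraph (Fin n)) (A : Fin n → Set Ω) (hA : IsDepGraph μ G A)
    (i : Fin n) (T : Finset (Fin n)) (hT : ∀ j ∈ T, j ≠ i ∧ ¬ G.Adj i j) :
    μ (A i ∩ ⋂ j ∈ T, (A j)ᶜ) = μ (A i) * μ (⋂ j ∈ T, (A j)ᶜ) := by
  have h := indep_mixed μ G A hA i T ∅ (by simp) hT
  simpa using h

lemma excl_reduce {Ω₂ : Type} [MeasurableSpace Ω₂] (μ₂ : Measure Ω₂)
    {n : ℕ} (G : SimpleGraph (Fin n)) (B : Fin n → Set Ω₂) (hexc : IsExclusive μ₂ G B)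
    (j : Fin n) (S : Finset (Fin n)) :
    μ₂ (B j ∩ ⋂ i ∈ S.filter (fun i => ¬ G.Adj j i), (B i)ᶜ) = μ₂ (B j ∩ ⋂ i ∈ S, (B i)ᶜ) := by
  apply le_antisymm
  · have hsub : B j ∩ ⋂ i ∈ S.filter (fun i => ¬ G.Adj j i), (B i)ᶜ ⊆
        (B j ∩ ⋂ i ∈ S, (B i)ᶜ) ∪ ⋃ i ∈ S.filter (fun i => G.Adj j i), B j ∩ B i := by
      intro x hx
      obtain ⟨hxj, hx'⟩ := hx
      simp only [Set.mem_iInter, Set.mem_compl_iff, Finset.mem_filter] at hx'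
      by_cases h : ∀ i ∈ S, x ∉ B i
      · left
        refine ⟨hxj, ?_⟩
        simp only [Set.mem_iInter, Set.mem_compl_iff]
        exact h
      · push_neg at h
        obtain ⟨i, hiS, hxi⟩ := h
        have hadj : G.Adj j i := by
          by_contra hna
          exact hx' i ⟨hiS, hna⟩ hxi
        right
        exact Set.mem_biUnion (Finset.mem_filter.mpr ⟨hiS, hadj⟩) ⟨hxj, hxi⟩
    calc μ₂ (B j ∩ ⋂ i ∈ S.filter (fun i => ¬ G.Adj j i), (B i)ᶜ)
        ≤ μ₂ ((B j ∩ ⋂ i ∈ S, (B i)ᶜ) ∪ ⋃ i ∈ S.filter (fun i => G.Adj j i), B j ∩ B i) :=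
          measure_mono hsub
      _ ≤ μ₂ (B j ∩ ⋂ i ∈ S, (B i)ᶜ) + μ₂ (⋃ i ∈ S.filter (fun i => G.Adj j i), B j ∩ B i) :=
          measure_union_le _ _
      _ ≤ μ₂ (B j ∩ ⋂ i ∈ S, (B i)ᶜ) + ∑ i ∈ S.filter (fun i => G.Adj j i), μ₂ (B j ∩ B i) := by
          gcongr
          exact measure_biUnion_finset_le _ _
      _ = μ₂ (B j ∩ ⋂ i ∈ S, (B i)ᶜ) := by
          rw [Finset.sum_eq_zero, add_zero]
          intro i hi
          exact hexc j i (Finset.mem_filter.mp hi).2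
  · apply measure_mono
    apply Set.inter_subset_inter_right
    intro x hx
    simp only [Set.mem_iInter, Set.mem_compl_iff] at hx ⊢
    intro i hi
    exact hx i (Finset.mem_filter.mp hi).1

lemma beta_rec {Ω₂ : Type} [MeasurableSpace Ω₂] (μ₂ : Measure Ω₂) [IsProbabilityMeasure μ₂]
    {n : ℕ} (G : SimpleGraph (Fin n)) (B : Fin n → Set Ω₂)
    (hB : IsDepGraph μ₂ G B) (hexc : IsExclusive μ₂ G B)
    (j : Fin n) (S : Finset (Fin n)) (hj : j ∉ S) :
    μ₂ (⋂ i ∈ insert j S, (B i)ᶜ) +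
      μ₂ (B j) * μ₂ (⋂ i ∈ S.filter (fun i => ¬ G.Adj j i), (B i)ᶜ) =
    μ₂ (⋂ i ∈ S, (B i)ᶜ) := by
  have hmB : MeasurableSet (B j) := hB.1 j
  have split := measure_inter_add_diff (μ := μ₂) (⋂ i ∈ S, (B i)ᶜ) hmB
  have e1 : (⋂ i ∈ S, (B i)ᶜ) \ B j = ⋂ i ∈ insert j S, (B i)ᶜ := by
    rw [Finset.set_biInter_insert]
    ext x
    simp only [Set.mem_diff, Set.mem_inter_iff, Set.mem_compl_iff]
    tauto
  have e2 : μ₂ ((⋂ i ∈ S, (B i)ᶜ) ∩ B j) =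
      μ₂ (B j) * μ₂ (⋂ i ∈ S.filter (fun i => ¬ G.Adj j i), (B i)ᶜ) := by
    rw [Set.inter_comm, ← excl_reduce μ₂ G B hexc j S]
    apply indep_compl μ₂ G B hB
    intro i hi
    obtain ⟨hiS, hna⟩ := Finset.mem_filter.mp hi
    refine ⟨fun h => hj (h ▸ hiS), hna⟩
  rw [e1, e2] at split
  rw [add_comm] at split
  exact split

lemma alpha_rec {Ω₁ : Type} [MeasurableSpace Ω₁] (μ₁ : Measure Ω₁) [IsProbabilityMeasure μ₁]
    {n : ℕ} (G : SimpleGraph (Fin n)) (A : Fin n → Set Ω₁) (hA : IsDepGraph μ₁ G A)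
    (j : Fin n) (S : Finset (Fin n)) (hj : j ∉ S) :
    μ₁ (⋂ i ∈ S, (A i)ᶜ) ≤ μ₁ (⋂ i ∈ insert j S, (A i)ᶜ) +
      μ₁ (A j) * μ₁ (⋂ i ∈ S.filter (fun i => ¬ G.Adj j i), (A i)ᶜ) := by
  have hmA : MeasurableSet (A j) := hA.1 j
  have split := measure_inter_add_diff (μ := μ₁) (⋂ i ∈ S, (A i)ᶜ) hmA
  have e1 : (⋂ i ∈ S, (A i)ᶜ) \ A j = ⋂ i ∈ insert j S, (A i)ᶜ := by
    rw [Finset.set_biInter_insert]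
    ext x
    simp only [Set.mem_diff, Set.mem_inter_iff, Set.mem_compl_iff]
    tauto
  have hle : μ₁ ((⋂ i ∈ S, (A i)ᶜ) ∩ A j) ≤
      μ₁ (A j) * μ₁ (⋂ i ∈ S.filter (fun i => ¬ G.Adj j i), (A i)ᶜ) := by
    rw [← indep_compl μ₁ G A hA j (S.filter (fun i => ¬ G.Adj j i)) ?_]
    · apply measure_mono
      rw [Set.inter_comm]
      apply Set.inter_subset_inter_right
      intro x hx
      simp only [Set.mem_iInter, Set.mem_compl_iff] at hx ⊢
      intro i hi
      exact hx i (Finset.mem_filter.mp hi).1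
    · intro i hi
      obtain ⟨hiS, hna⟩ := Finset.mem_filter.mp hi
      refine ⟨fun h => hj (h ▸ hiS), hna⟩
  calc μ₁ (⋂ i ∈ S, (A i)ᶜ) = μ₁ ((⋂ i ∈ S, (A i)ᶜ) ∩ A j) + μ₁ (⋂ i ∈ insert j S, (A i)ᶜ) := by
        rw [← split, e1]
    _ ≤ μ₁ (⋂ i ∈ insert j S, (A i)ᶜ) +
        μ₁ (A j) * μ₁ (⋂ i ∈ S.filter (fun i => ¬ G.Adj j i), (A i)ᶜ) := by
        rw [add_comm]
        gcongr

lemma shearer_main {Ω₁ Ω₂ : Type} [MeasurableSpace Ω₁] [MeasurableSpace Ω₂]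
    (μ₁ : Measure Ω₁) (μ₂ : Measure Ω₂)
    [IsProbabilityMeasure μ₁] [IsProbabilityMeasure μ₂]
    {n : ℕ} (G : SimpleGraph (Fin n)) (A : Fin n → Set Ω₁) (B : Fin n → Set Ω₂)
    (hA : IsDepGraph μ₁ G A) (hB : IsDepGraph μ₂ G B) (hexc : IsExclusive μ₂ G B)
    (hpq : ∀ i, μ₁ (A i) = μ₂ (B i))
    (hβpos : 0 < μ₂ (⋂ i, (B i)ᶜ)) :
    ∀ S T : Finset (Fin n), T ⊆ S →
      (μ₁ (⋂ i ∈ T, (A i)ᶜ)).toReal * (μ₂ (⋂ i ∈ S, (B i)ᶜ)).toReal ≤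
      (μ₁ (⋂ i ∈ S, (A i)ᶜ)).toReal * (μ₂ (⋂ i ∈ T, (B i)ᶜ)).toReal := by
  have hbpos : ∀ S : Finset (Fin n), 0 < (μ₂ (⋂ i ∈ S, (B i)ᶜ)).toReal := by
    intro S
    have hle : μ₂ (⋂ i, (B i)ᶜ) ≤ μ₂ (⋂ i ∈ S, (B i)ᶜ) := by
      apply measure_mono
      intro x hx
      simp only [Set.mem_iInter] at hx ⊢
      intro i _
      exact hx i
    exact ENNReal.toReal_pos (lt_of_lt_of_le hβpos hle).ne' (measure_ne_top _ _)
  have brec : ∀ (j : Fin n) (S : Finset (Fin n)), j ∉ S →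
      (μ₂ (⋂ i ∈ insert j S, (B i)ᶜ)).toReal =
        (μ₂ (⋂ i ∈ S, (B i)ᶜ)).toReal -
          (μ₂ (B j)).toReal *
            (μ₂ (⋂ i ∈ S.filter (fun i => ¬ G.Adj j i), (B i)ᶜ)).toReal := by
    intro j S hj
    have h := congrArg ENNReal.toReal (beta_rec μ₂ G B hB hexc j S hj)
    rw [ENNReal.toReal_add (measure_ne_top _ _)
        (ENNReal.mul_ne_top (measure_ne_top _ _) (measure_ne_top _ _)),
      ENNReal.toReal_mul] at h
    linarith
  have arec : ∀ (j : Fin n) (S : Finset (Fin n)), j ∉ S →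
      (μ₁ (⋂ i ∈ S, (A i)ᶜ)).toReal -
          (μ₂ (B j)).toReal *
            (μ₁ (⋂ i ∈ S.filter (fun i => ¬ G.Adj j i), (A i)ᶜ)).toReal ≤
        (μ₁ (⋂ i ∈ insert j S, (A i)ᶜ)).toReal := by
    intro j S hj
    have h := alpha_rec μ₁ G A hA j S hj
    have h' := (ENNReal.toReal_le_toReal (measure_ne_top _ _)
        (ENNReal.add_ne_top.mpr ⟨measure_ne_top _ _,
          ENNReal.mul_ne_top (measure_ne_top _ _) (measure_ne_top _ _)⟩)).mpr h
    rw [ENNReal.toReal_add (measure_ne_top _ _)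
        (ENNReal.mul_ne_top (measure_ne_top _ _) (measure_ne_top _ _)),
      ENNReal.toReal_mul, hpq j] at h'
    linarith
  intro S
  induction S using Finset.strongInduction with
  | _ S IH =>
    intro T hTS
    rcases eq_or_ne T S with rfl | hne
    · exact le_rfl
    have hss : T ⊂ S := Finset.ssubset_iff_subset_ne.mpr ⟨hTS, hne⟩
    obtain ⟨j, hjS, hjT⟩ := Finset.exists_of_ssubset hss
    have hjS' : j ∉ S.erase j := Finset.notMem_erase j S
    have hins : insert j (S.erase j) = S := Finset.insert_erase hjS
    have hTsub : T ⊆ S.erase j := Finset.subset_erase.mpr ⟨hTS, hjT⟩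
    have hS'ss : S.erase j ⊂ S := Finset.erase_ssubset hjS
    have IH' := IH (S.erase j) hS'ss
    have h2 : (μ₁ (⋂ i ∈ S.erase j, (A i)ᶜ)).toReal * (μ₂ (⋂ i ∈ S, (B i)ᶜ)).toReal ≤
        (μ₁ (⋂ i ∈ S, (A i)ᶜ)).toReal * (μ₂ (⋂ i ∈ S.erase j, (B i)ᶜ)).toReal := by
      have hb' := brec j (S.erase j) hjS'
      have ha' := arec j (S.erase j) hjS'
      rw [hins] at hb' ha'
      have hIH2 := IH' ((S.erase j).filter (fun i => ¬ G.Adj j i)) (Finset.filter_subset _ _)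
      have hq : (0:ℝ) ≤ (μ₂ (B j)).toReal := ENNReal.toReal_nonneg
      have hbS' : (0:ℝ) < (μ₂ (⋂ i ∈ S.erase j, (B i)ᶜ)).toReal := hbpos _
      have haS' : (0:ℝ) ≤ (μ₁ (⋂ i ∈ S.erase j, (A i)ᶜ)).toReal := ENNReal.toReal_nonneg
      nlinarith [mul_le_mul_of_nonneg_right ha' hbS'.le, mul_le_mul_of_nonneg_left hIH2 hq]
    have h1 := IH' T hTsub
    have hbS : (0:ℝ) ≤ (μ₂ (⋂ i ∈ S, (B i)ᶜ)).toReal := ENNReal.toReal_nonneg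
    have hbT : (0:ℝ) ≤ (μ₂ (⋂ i ∈ T, (B i)ᶜ)).toReal := ENNReal.toReal_nonneg
    have hbS' : (0:ℝ) < (μ₂ (⋂ i ∈ S.erase j, (B i)ᶜ)).toReal := hbpos _
    have c1 := mul_le_mul_of_nonneg_right h1 hbS
    have c2 := mul_le_mul_of_nonneg_right h2 hbT
    have : ((μ₁ (⋂ i ∈ T, (A i)ᶜ)).toReal * (μ₂ (⋂ i ∈ S, (B i)ᶜ)).toReal) *
        (μ₂ (⋂ i ∈ S.erase j, (B i)ᶜ)).toReal ≤
        ((μ₁ (⋂ i ∈ S, (A i)ᶜ)).toReal * (μ₂ (⋂ i ∈ T, (B i)ᶜ)).toReal) *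
        (μ₂ (⋂ i ∈ S.erase j, (B i)ᶜ)).toReal := by nlinarith
    exact le_of_mul_le_mul_right this hbS'

theorem stmt12 {Ω₁ Ω₂ : Type} [MeasurableSpace Ω₁] [MeasurableSpace Ω₂]
    (μ₁ : Measure Ω₁) (μ₂ : Measure Ω₂)
    [IsProbabilityMeasure μ₁] [IsProbabilityMeasure μ₂]
    {n : ℕ} (G : SimpleGraph (Fin n)) (A : Fin n → Set Ω₁) (B : Fin n → Set Ω₂)
    (hA : IsDepGraph μ₁ G A) (hB : IsDepGraph μ₂ G B) (hexc : IsExclusive μ₂ G B)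
    (hpq : ∀ i, μ₁ (A i) = μ₂ (B i))
    (hβpos : 0 < μ₂ (⋂ i, (B i)ᶜ)) :
    (∀ S₁ S₂ : Finset (Fin n), S₁ ⊆ S₂ →
      (μ₁ (⋂ i ∈ S₁, (A i)ᶜ)).toReal / (μ₂ (⋂ i ∈ S₁, (B i)ᶜ)).toReal ≤
      (μ₁ (⋂ i ∈ S₂, (A i)ᶜ)).toReal / (μ₂ (⋂ i ∈ S₂, (B i)ᶜ)).toReal) ∧
    (∀ S : Finset (Fin n),
      1 ≤ (μ₁ (⋂ i ∈ S, (A i)ᶜ)).toReal / (μ₂ (⋂ i ∈ S, (B i)ᶜ)).toReal) ∧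
    μ₂ (⋂ i, (B i)ᶜ) ≤ μ₁ (⋂ i, (A i)ᶜ) := by
  have main := shearer_main μ₁ μ₂ G A B hA hB hexc hpq hβpos
  have hbpos : ∀ S : Finset (Fin n), 0 < (μ₂ (⋂ i ∈ S, (B i)ᶜ)).toReal := by
    intro S
    have hle : μ₂ (⋂ i, (B i)ᶜ) ≤ μ₂ (⋂ i ∈ S, (B i)ᶜ) := by
      apply measure_mono
      intro x hx
      simp only [Set.mem_iInter] at hx ⊢
      intro i _
      exact hx i
    exact ENNReal.toReal_pos (lt_of_lt_of_le hβpos hle).ne' (measure_ne_top _ _)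
  have hle1 : ∀ S : Finset (Fin n),
      (μ₂ (⋂ i ∈ S, (B i)ᶜ)).toReal ≤ (μ₁ (⋂ i ∈ S, (A i)ᶜ)).toReal := by
    intro S
    have h := main S ∅ (Finset.empty_subset S)
    simp only [Finset.notMem_empty, Set.iInter_of_empty, Set.iInter_univ,
      measure_univ, ENNReal.toReal_one, one_mul, mul_one] at h
    exact h
  refine ⟨?_, ?_, ?_⟩
  · intro S₁ S₂ hsub
    rw [div_le_div_iff₀ (hbpos S₁) (hbpos S₂)]
    exact main S₂ S₁ hsub
  · intro S
    rw [le_div_iff₀ (hbpos S), one_mul]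
    exact hle1 S
  · have h := hle1 Finset.univ
    have e1 : (⋂ i ∈ (Finset.univ : Finset (Fin n)), (B i)ᶜ) = ⋂ i, (B i)ᶜ := by
      ext x; simp
    have e2 : (⋂ i ∈ (Finset.univ : Finset (Fin n)), (A i)ᶜ) = ⋂ i, (A i)ᶜ := by
      ext x; simp
    rw [e1, e2] at h
    exact (ENNReal.toReal_le_toReal (measure_ne_top _ _) (measure_ne_top _ _)).mp h
end

section
/- Convexity in the cycle-breaking proof: fix constants p_1, ..., p_{n−1} ∈ (0,1) with n ≥ 4. Define f_0(x) = p_{n−2}/x and f_k(x) = p_{n−2−k}/(1 − f_{k−1}(x)) for 1 ≤ k ≤ n−3, on an interval where all denominators are positive and all f_k(x) ∈ (0,1). Then each f_k is strictly convex on this interval (f_k'' > 0), and consequently the function g(x) = f_{n−3}(x) · p_{n−1}/(1 − x) has the property that h(x) = f_{n−3}(x) + f_{n−3}'(x)(1−x) is strictly increasing; hence g is either strictly monotonic on the interval or first decreasing then increasing, so g attains its maximum over any closed subinterval at an endpoint. -/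
/-!
Every `f_k` is, near the interval, a Möbius map `x ↦ (A x + B) / (C x + D)` with `C > 0`,
negative determinant `A D - B C` and its pole to the left of the interval: `f_0 = p / x` is one,
and `f ↦ q / (1 - f)` acts on the coefficients by `(A, B, C, D) ↦ (q C, q D, C - A, D - B)`,
keeping these sign conditions as long as `f < 1`. Such a map has second derivative
`-2 C (A D - B C) / (C x + D)³ > 0`. For a strictly convex `f`, `f x + f' x (1 - x)` is the value at
`1` of the tangent line at `x`, which increases with `x`; and `g' = p (f + f' (1 - x)) / (1 - x)²`,
so `g'` changes sign at most once, from negative to positive.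
-/

open Set Filter Topology

noncomputable def mobius (A B C D x : ℝ) : ℝ := (A * x + B) / (C * x + D)

section Mobius

variable {A B C D : ℝ}

theorem hasDerivAt_mobius {x : ℝ} (hx : C * x + D ≠ 0) :
    HasDerivAt (mobius A B C D) ((A * D - B * C) / (C * x + D) ^ 2) x := by
  have hnum : HasDerivAt (fun y : ℝ => A * y + B) A x := by
    simpa using ((hasDerivAt_id x).const_mul A).add_const B
  have hden : HasDerivAt (fun y : ℝ => C * y + D) C x := by
    simpa using ((hasDerivAt_id x).const_mul C).add_const D
  exact (hnum.fun_div hden hx).congr_deriv (by ring)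

theorem hasDerivAt_const_div_sq_affine (E : ℝ) {x : ℝ} (hx : C * x + D ≠ 0) :
    HasDerivAt (fun y => E / (C * y + D) ^ 2) (-2 * C * E / (C * x + D) ^ 3) x := by
  have hden : HasDerivAt (fun y : ℝ => (C * y + D) ^ 2) (2 * (C * x + D) * C) x := by
    simpa using (((hasDerivAt_id x).const_mul C).add_const D).fun_pow 2
  refine ((hasDerivAt_const x E).fun_div hden (pow_ne_zero 2 hx)).congr_deriv ?_
  field_simp
  ring

theorem strictConvexOn_mobius {s : Set ℝ} (hs : Convex ℝ s) (hC : 0 < C)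
    (hdet : A * D - B * C < 0) (hpos : ∀ x ∈ s, 0 < C * x + D) :
    StrictConvexOn ℝ s (mobius A B C D) := by
  refine strictConvexOn_of_deriv2_pos hs
    (fun x hx => (hasDerivAt_mobius (hpos x hx).ne').continuousAt.continuousWithinAt)
    fun x hx => ?_
  have hx_pos := hpos x (interior_subset hx)
  have hderiv : deriv (mobius A B C D) =ᶠ[𝓝 x] fun y => (A * D - B * C) / (C * y + D) ^ 2 :=
    eventually_of_mem (isOpen_interior.mem_nhds hx) fun y hy =>
      (hasDerivAt_mobius (hpos y (interior_subset hy)).ne').deriv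
  rw [show deriv^[2] (mobius A B C D) x = deriv (deriv (mobius A B C D)) x from rfl,
    hderiv.deriv_eq, (hasDerivAt_const_div_sq_affine _ hx_pos.ne').deriv]
  exact div_pos (by nlinarith) (pow_pos hx_pos 3)

theorem const_div_one_sub_mobius (q : ℝ) {x : ℝ} (hx : C * x + D ≠ 0) :
    q / (1 - mobius A B C D x) = mobius (q * C) (q * D) (C - A) (D - B) x := by
  unfold mobius
  rw [one_sub_div hx, div_div_eq_mul_div]
  ring_nf

end Mobius

def IsLocallyMobiusOn (f : ℝ → ℝ) (s : Set ℝ) : Prop :=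
  ∃ A B C D : ℝ, 0 < C ∧ A * D - B * C < 0 ∧
    ∀ x ∈ s, 0 < C * x + D ∧ f =ᶠ[𝓝 x] mobius A B C D

theorem isLocallyMobiusOn_const_div {r : ℝ} {s : Set ℝ} (hr : 0 < r) (hs : ∀ x ∈ s, 0 < x) :
    IsLocallyMobiusOn (fun x => r / x) s := by
  refine ⟨0, r, 1, 0, one_pos, by linarith, fun x hx => ⟨by linarith [hs x hx], ?_⟩⟩
  exact EventuallyEq.of_eq (funext fun y => by simp [mobius])

namespace IsLocallyMobiusOn

variable {f : ℝ → ℝ} {s : Set ℝ}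

theorem const_div_one_sub (hf : IsLocallyMobiusOn f s) (hs : s.Nonempty) {q : ℝ} (hq : 0 < q)
    (hlt : ∀ x ∈ s, f x < 1) : IsLocallyMobiusOn (fun x => q / (1 - f x)) s := by
  obtain ⟨A, B, C, D, hC, hdet, hloc⟩ := hf
  have hnext : ∀ x ∈ s, 0 < (C - A) * x + (D - B) := by
    intro x hx
    have hfx : f x = mobius A B C D x := (hloc x hx).2.eq_of_nhds
    have hden := (hloc x hx).1
    have hfactor : (C - A) * x + (D - B) = (C * x + D) * (1 - f x) := by
      rw [hfx, mobius]
      field_simp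
      ring
    rw [hfactor]
    exact mul_pos hden (sub_pos.2 (hlt x hx))
  obtain ⟨x₀, hx₀⟩ := hs
  refine ⟨q * C, q * D, C - A, D - B, ?_, ?_, fun x hx => ⟨hnext x hx, ?_⟩⟩
  · -- evaluate `(C - A) (C x₀ + D) = C ((C - A) x₀ + (D - B)) - (A D - B C)` at a point of `s`
    have hprod := mul_pos hC (hnext x₀ hx₀)
    nlinarith [(hloc x₀ hx₀).1]
  · nlinarith
  · have hden : ∀ᶠ y in 𝓝 x, 0 < C * y + D :=
      continuousAt_const.eventually_lt (by fun_prop) (hloc x hx).1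
    filter_upwards [(hloc x hx).2, hden] with y hfy hy
    rw [hfy, const_div_one_sub_mobius q hy.ne']

theorem strictConvexOn (hf : IsLocallyMobiusOn f s) (hs : Convex ℝ s) :
    StrictConvexOn ℝ s f := by
  obtain ⟨A, B, C, D, hC, hdet, hloc⟩ := hf
  exact (strictConvexOn_mobius hs hC hdet fun x hx => (hloc x hx).1).congr
    fun x hx => (hloc x hx).2.eq_of_nhds.symm

theorem differentiableAt (hf : IsLocallyMobiusOn f s) : ∀ x ∈ s, DifferentiableAt ℝ f x := by
  obtain ⟨A, B, C, D, -, -, hloc⟩ := hf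
  exact fun x hx => (hasDerivAt_mobius (hloc x hx).1.ne').differentiableAt.congr_of_eventuallyEq
    (hloc x hx).2

end IsLocallyMobiusOn

theorem StrictConvexOn.strictMonoOn_add_deriv_mul_sub {S : Set ℝ} {f : ℝ → ℝ} {c : ℝ}
    (hfc : StrictConvexOn ℝ S f) (hfd : ∀ x ∈ S, DifferentiableAt ℝ f x)
    (hc : ∀ x ∈ S, x ≤ c) : StrictMonoOn (fun x => f x + deriv f x * (c - x)) S := by
  intro x hx y hy hxy
  have htangent := hfc.deriv_lt_slope hx hy hxy (hfd x hx)
  rw [slope_def_field, lt_div_iff₀ (sub_pos.2 hxy)] at htangent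
  have hderiv := mul_le_mul_of_nonneg_right (hfc.strictMonoOn_deriv hfd hx hy hxy).le
    (sub_nonneg.2 (hc y hy))
  dsimp only
  linarith

theorem HasDerivAt.mul_const_div_one_sub {f : ℝ → ℝ} {f' x : ℝ} (hf : HasDerivAt f f' x)
    (r : ℝ) (hx : x ≠ 1) :
    HasDerivAt (fun y => f y * (r / (1 - y))) (r / (1 - x) ^ 2 * (f x + f' * (1 - x))) x := by
  have hx' : 1 - x ≠ 0 := sub_ne_zero.2 hx.symm
  have hfactor : HasDerivAt (fun y : ℝ => r / (1 - y)) (r / (1 - x) ^ 2) x := by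
    refine ((hasDerivAt_const x r).fun_div ((hasDerivAt_id x).const_sub 1) hx').congr_deriv ?_
    simp
  refine (hf.fun_mul hfactor).congr_deriv ?_
  field_simp
  ring

theorem le_max_of_deriv_nonneg_iff_monotoneOn {g h : ℝ → ℝ} {c d : ℝ}
    (hg : ∀ y ∈ Icc c d, DifferentiableAt ℝ g y) (hh : MonotoneOn h (Icc c d))
    (hsign : ∀ y ∈ Ioo c d, 0 ≤ deriv g y ↔ 0 ≤ h y) :
    ∀ x ∈ Icc c d, g x ≤ max (g c) (g d) := by
  intro x hx
  have hcont {u v : ℝ} (hsub : Icc u v ⊆ Icc c d) : ContinuousOn g (Icc u v) :=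
    fun y hy => (hg y (hsub hy)).continuousAt.continuousWithinAt
  have hdiff {u v : ℝ} (hsub : Icc u v ⊆ Icc c d) : DifferentiableOn ℝ g (interior (Icc u v)) :=
    fun y hy => (hg y (hsub (interior_subset hy))).differentiableWithinAt
  rcases lt_or_ge (h x) 0 with hneg | hnonneg
  · have hsub : Icc c x ⊆ Icc c d := Icc_subset_Icc_right hx.2
    have hanti : AntitoneOn g (Icc c x) := by
      refine antitoneOn_of_deriv_nonpos (convex_Icc c x) (hcont hsub) (hdiff hsub) fun y hy => ?_
      rw [interior_Icc] at hy
      have hy_neg : h y < 0 := (hh (hsub (Ioo_subset_Icc_self hy)) hx hy.2.le).trans_lt hneg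
      exact (not_le.1 ((hsign y ⟨hy.1, hy.2.trans_le hx.2⟩).not.2 hy_neg.not_ge)).le
    exact le_max_of_le_left (hanti (left_mem_Icc.2 hx.1) (right_mem_Icc.2 hx.1) hx.1)
  · have hsub : Icc x d ⊆ Icc c d := Icc_subset_Icc_left hx.1
    have hmono : MonotoneOn g (Icc x d) := by
      refine monotoneOn_of_deriv_nonneg (convex_Icc x d) (hcont hsub) (hdiff hsub) fun y hy => ?_
      rw [interior_Icc] at hy
      exact (hsign y ⟨hx.1.trans_lt hy.1, hy.2⟩).2
        (hnonneg.trans (hh hx (hsub (Ioo_subset_Icc_self hy)) hy.1.le))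
    exact le_max_of_le_right (hmono (left_mem_Icc.2 hx.2) (right_mem_Icc.2 hx.2) hx.2)

theorem stmt14 {n : ℕ} (hn : 4 ≤ n) (p : ℕ → ℝ)
    (hp : ∀ k, 1 ≤ k → k ≤ n - 1 → 0 < p k ∧ p k < 1)
    (f : ℕ → ℝ → ℝ)
    (hf0 : ∀ x : ℝ, f 0 x = p (n - 2) / x)
    (hfk : ∀ (k : ℕ) (x : ℝ), f (k + 1) x = p (n - 3 - k) / (1 - f k x))
    (a b : ℝ) (ha : 0 < a) (hab : a ≤ b) (hb : b < 1)
    (hrange : ∀ x ∈ Set.Icc a b, ∀ k ≤ n - 3, 0 < f k x ∧ f k x < 1) :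
    (∀ k ≤ n - 3, StrictConvexOn ℝ (Set.Icc a b) (f k)) ∧
    StrictMonoOn (fun x => f (n - 3) x + deriv (f (n - 3)) x * (1 - x)) (Set.Icc a b) ∧
    (∀ c d : ℝ, a ≤ c → c ≤ d → d ≤ b →
      ∀ x ∈ Set.Icc c d,
        f (n - 3) x * (p (n - 1) / (1 - x)) ≤
          max (f (n - 3) c * (p (n - 1) / (1 - c)))
              (f (n - 3) d * (p (n - 1) / (1 - d)))) := by
  have hp_pos (k : ℕ) (h1 : 1 ≤ k) (h2 : k ≤ n - 1) : 0 < p k := (hp k h1 h2).1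
  have hmob : ∀ k ≤ n - 3, IsLocallyMobiusOn (f k) (Icc a b) := by
    intro k hk
    induction k with
    | zero =>
      rw [funext hf0]
      exact isLocallyMobiusOn_const_div (hp_pos _ (by omega) (by omega))
        fun x hx => ha.trans_le hx.1
    | succ k ih =>
      rw [funext (hfk k)]
      exact (ih (by omega)).const_div_one_sub (nonempty_Icc.2 hab)
        (hp_pos _ (by omega) (by omega)) fun x hx => (hrange x hx k (by omega)).2
  have hconv (k : ℕ) (hk : k ≤ n - 3) : StrictConvexOn ℝ (Icc a b) (f k) :=
    (hmob k hk).strictConvexOn (convex_Icc a b)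
  have hdiff := (hmob (n - 3) le_rfl).differentiableAt
  have hmono := (hconv (n - 3) le_rfl).strictMonoOn_add_deriv_mul_sub hdiff
    fun x hx => hx.2.trans hb.le
  refine ⟨hconv, hmono, fun c d hac _ hdb => ?_⟩
  have hsub : Icc c d ⊆ Icc a b := Icc_subset_Icc hac hdb
  have hderiv (y : ℝ) (hy : y ∈ Icc c d) := (hdiff y (hsub hy)).hasDerivAt.mul_const_div_one_sub
    (p (n - 1)) (hy.2.trans_lt (hdb.trans_lt hb)).ne
  refine le_max_of_deriv_nonneg_iff_monotoneOn (fun y hy => (hderiv y hy).differentiableAt)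
    (hmono.monotoneOn.mono hsub) fun y hy => ?_
  rw [(hderiv y (Ioo_subset_Icc_self hy)).deriv]
  have hy1 : 0 < 1 - y := sub_pos.2 ((hy.2.trans_le hdb).trans hb)
  exact mul_nonneg_iff_of_pos_left (div_pos (hp_pos _ (by omega) (by omega)) (pow_pos hy1 2))
end

section
/- Infeasibility of constraints in the gapfulness proof of H*: there exists ε_0 > 0 such that for all 0 < ε < ε_0, there do not exist reals γ_1, γ_2, γ_3 ∈ [0,1] and λ_1, λ_2, λ_3 ∈ [0,1] satisfying simultaneously: γ_i λ_i ≥ 2/9 − (2/3)ε for i = 1,2,3; γ_1 + γ_2 + γ_3 ≤ 1; and (1 − λ_1)(1 − λ_2)(1 − λ_3) ≥ 1/6 + ε. -/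
private lemma stmt19_key (ε c a b d : ℝ) (hε : 0 < ε) (hε' : ε < 1/100)
    (hc : c = 2/9 - (2/3)*ε)
    (hca : c ≤ a) (hcb : c ≤ b) (hcd : c ≤ d)
    (hsum : a + b + d ≤ 1) :
    6 * ((a - c) * (b - c) * (d - c)) < a * b * d := by
  nlinarith [sq_nonneg (a-b), sq_nonneg (a-d), sq_nonneg (b-d), sq_nonneg (a+b+d),
    mul_nonneg (sub_nonneg.2 hca) (sub_nonneg.2 hcb),
    mul_nonneg (sub_nonneg.2 hca) (sub_nonneg.2 hcd),
    mul_nonneg (sub_nonneg.2 hcb) (sub_nonneg.2 hcd),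
    mul_nonneg (mul_nonneg (sub_nonneg.2 hca) (sub_nonneg.2 hcb)) (sub_nonneg.2 hcd),
    sq_nonneg ε,
    mul_nonneg (sq_nonneg (a-b)) (sub_nonneg.2 hcd),
    mul_nonneg (sq_nonneg (a-d)) (sub_nonneg.2 hcb),
    mul_nonneg (sq_nonneg (b-d)) (sub_nonneg.2 hca)]


theorem stmt19 :
    ∃ ε₀ > (0:ℝ), ∀ ε : ℝ, 0 < ε → ε < ε₀ →
      ¬ ∃ γ₁ γ₂ γ₃ lam₁ lam₂ lam₃ : ℝ,
        γ₁ ∈ Set.Icc (0:ℝ) 1 ∧ γ₂ ∈ Set.Icc (0:ℝ) 1 ∧ γ₃ ∈ Set.Icc (0:ℝ) 1 ∧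
        lam₁ ∈ Set.Icc (0:ℝ) 1 ∧ lam₂ ∈ Set.Icc (0:ℝ) 1 ∧ lam₃ ∈ Set.Icc (0:ℝ) 1 ∧
        2/9 - (2/3) * ε ≤ γ₁ * lam₁ ∧
        2/9 - (2/3) * ε ≤ γ₂ * lam₂ ∧
        2/9 - (2/3) * ε ≤ γ₃ * lam₃ ∧
        γ₁ + γ₂ + γ₃ ≤ 1 ∧
        1/6 + ε ≤ (1 - lam₁) * (1 - lam₂) * (1 - lam₃) := by
  refine ⟨1/100, by norm_num, ?_⟩
  rintro ε hε hε' ⟨a, b, d, l₁, l₂, l₃, ⟨ha0, ha1⟩, ⟨hb0, hb1⟩, ⟨hd0, hd1⟩,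
    ⟨hl10, hl11⟩, ⟨hl20, hl21⟩, ⟨hl30, hl31⟩, h1, h2, h3, hsum, hprod⟩
  set c : ℝ := 2/9 - (2/3) * ε with hc
  have hcpos : (0:ℝ) < c := by simp only [hc]; linarith
  have hca : c ≤ a := le_trans h1 (by nlinarith)
  have hcb : c ≤ b := le_trans h2 (by nlinarith)
  have hcd : c ≤ d := le_trans h3 (by nlinarith)
  -- a * (1 - l₁) ≤ a - c, etc.
  have k1 : a * (1 - l₁) ≤ a - c := by nlinarith
  have k2 : b * (1 - l₂) ≤ b - c := by nlinarith
  have k3 : d * (1 - l₃) ≤ d - c := by nlinarith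
  have p1 : 0 ≤ a * (1 - l₁) := mul_nonneg ha0 (by linarith)
  have p2 : 0 ≤ b * (1 - l₂) := mul_nonneg hb0 (by linarith)
  have p3 : 0 ≤ d * (1 - l₃) := mul_nonneg hd0 (by linarith)
  have habd : 0 < a * b * d :=
    mul_pos (mul_pos (lt_of_lt_of_le hcpos hca) (lt_of_lt_of_le hcpos hcb))
      (lt_of_lt_of_le hcpos hcd)
  have hstep : a * b * d * ((1 - l₁) * (1 - l₂) * (1 - l₃)) ≤ (a - c) * (b - c) * (d - c) := by
    calc a * b * d * ((1 - l₁) * (1 - l₂) * (1 - l₃))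
        = a * (1 - l₁) * (b * (1 - l₂)) * (d * (1 - l₃)) := by ring
      _ ≤ (a - c) * (b - c) * (d - c) := by
          apply mul_le_mul (mul_le_mul k1 k2 p2 (by linarith)) k3 p3
          exact mul_nonneg (by linarith) (by linarith)
  have hlow : a * b * d * (1/6 + ε) ≤ a * b * d * ((1 - l₁) * (1 - l₂) * (1 - l₃)) :=
    mul_le_mul_of_nonneg_left hprod habd.le
  have hkey : 6 * ((a - c) * (b - c) * (d - c)) < a * b * d :=
    stmt19_key ε c a b d hε hε' hc hca hcb hcd hsum
  linarith [hlow, hstep, hkey, mul_pos habd hε]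
end
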